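/- arXiv:1912.11246 — 7 statements merged into one kernel-verified Lean document; each statement's English description precedes it below -/
import Mathlib

section
/- For every integer k ≥ 1, the k-prism graph has exactly 2^k − 2 minimal separators. -/
open SimpleGraph

variable {V : Type*}

/-- The arc of the cycle `ZMod n` going from `i` to `j` in increasing direction. -/
def arc {n : ℕ} (i j : ZMod n) : Set (ZMod n) := {k | (k - i).val ≤ (j - i).val}

/-- `f` is a hole (induced cycle of length `n ≥ 4`) in `G`. -/
def IsHoleEmb (G : SimpleGraph V) (n : ℕ) (f : ZMod n → V) : Prop :=
  4 ≤ n ∧ Function.Injective f ∧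
    ∀ i j : ZMod n, G.Adj (f i) (f j) ↔ (j = i + 1 ∨ i = j + 1)

/-- Neighbors of `u` on the hole `f`. -/
def NbrsOn (G : SimpleGraph V) {n : ℕ} (f : ZMod n → V) (u : V) : Set V :=
  {w | w ∈ Set.range f ∧ G.Adj u w}

/-- `u` is major w.r.t. the hole `f`: its neighbors on the hole are not contained in a
3-vertex subpath of the hole. -/
def MajorWrt (G : SimpleGraph V) {n : ℕ} (f : ZMod n → V) (u : V) : Prop :=
  u ∉ Set.range f ∧ ¬ ∃ i : ZMod n, NbrsOn G f u ⊆ {f (i - 1), f i, f (i + 1)}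

/-- `u` is a clone of `f i` w.r.t. the hole `f`. -/
def CloneWrt (G : SimpleGraph V) {n : ℕ} (f : ZMod n → V) (u : V) (i : ZMod n) : Prop :=
  u ∉ Set.range f ∧ NbrsOn G f u = {f (i - 1), f i, f (i + 1)}

/-- `u` and `v` are nested w.r.t. the hole `f`. -/
def NestedWrt (G : SimpleGraph V) {n : ℕ} (f : ZMod n → V) (u v : V) : Prop :=
  ∃ i j : ZMod n, i ≠ j ∧ NbrsOn G f u ⊆ f '' arc i j ∧ NbrsOn G f v ⊆ f '' arc j i

/-- The arc from `f i` to `f j` is a `u`-sector of the hole `f`. -/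
def IsSector (G : SimpleGraph V) {n : ℕ} (f : ZMod n → V) (u : V) (i j : ZMod n) : Prop :=
  i ≠ j ∧ G.Adj u (f i) ∧ G.Adj u (f j) ∧
    ∀ k ∈ arc i j, k ≠ i → k ≠ j → ¬ G.Adj u (f k)

/-- `g` is a chordless (induced) path of length `m` in `G`. -/
def IsCPath (G : SimpleGraph V) (m : ℕ) (g : Fin (m + 1) → V) : Prop :=
  Function.Injective g ∧
    ∀ i j : Fin (m + 1), G.Adj (g i) (g j) ↔ (i.val + 1 = j.val ∨ j.val + 1 = i.val)

def HasSquare (G : SimpleGraph V) : Prop := ∃ f : ZMod 4 → V, IsHoleEmb G 4 f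

def HasEvenHole (G : SimpleGraph V) : Prop :=
  ∃ (n : ℕ) (f : ZMod n → V), IsHoleEmb G n f ∧ Even n

def HasEvenWheel (G : SimpleGraph V) : Prop :=
  ∃ (n : ℕ) (f : ZMod n → V) (v : V), IsHoleEmb G n f ∧ v ∉ Set.range f ∧
    3 ≤ (NbrsOn G f v).ncard ∧ Even (NbrsOn G f v).ncard

/-- A theta configuration: three internally disjoint chordless paths of length `≥ 2`
from `f₁ 0` to `f₁ (last)`, with no edges between the paths except at the two ends. -/
def ThetaConfig (G : SimpleGraph V) (n₁ n₂ n₃ : ℕ) (f₁ : Fin (n₁ + 1) → V)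
    (f₂ : Fin (n₂ + 1) → V) (f₃ : Fin (n₃ + 1) → V) : Prop :=
  2 ≤ n₁ ∧ 2 ≤ n₂ ∧ 2 ≤ n₃ ∧
  IsCPath G n₁ f₁ ∧ IsCPath G n₂ f₂ ∧ IsCPath G n₃ f₃ ∧
  f₂ 0 = f₁ 0 ∧ f₃ 0 = f₁ 0 ∧
  f₂ (Fin.last n₂) = f₁ (Fin.last n₁) ∧ f₃ (Fin.last n₃) = f₁ (Fin.last n₁) ∧
  ¬ G.Adj (f₁ 0) (f₁ (Fin.last n₁)) ∧
  (∀ i j, i ≠ 0 → i ≠ Fin.last n₁ → j ≠ 0 → j ≠ Fin.last n₂ →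
    f₁ i ≠ f₂ j ∧ ¬ G.Adj (f₁ i) (f₂ j)) ∧
  (∀ i j, i ≠ 0 → i ≠ Fin.last n₁ → j ≠ 0 → j ≠ Fin.last n₃ →
    f₁ i ≠ f₃ j ∧ ¬ G.Adj (f₁ i) (f₃ j)) ∧
  (∀ i j, i ≠ 0 → i ≠ Fin.last n₂ → j ≠ 0 → j ≠ Fin.last n₃ →
    f₂ i ≠ f₃ j ∧ ¬ G.Adj (f₂ i) (f₃ j))

def HasTheta (G : SimpleGraph V) : Prop :=
  ∃ (n₁ n₂ n₃ : ℕ) (f₁ : Fin (n₁ + 1) → V) (f₂ : Fin (n₂ + 1) → V) (f₃ : Fin (n₃ + 1) → V),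
    ThetaConfig G n₁ n₂ n₃ f₁ f₂ f₃

/-- A prism configuration: three pairwise disjoint chordless paths of length `≥ 1`
joining the triangle `f₁ 0, f₂ 0, f₃ 0` to the triangle `f₁ last, f₂ last, f₃ last`,
with no other edges between the paths. -/
def PrismConfig (G : SimpleGraph V) (n₁ n₂ n₃ : ℕ) (f₁ : Fin (n₁ + 1) → V)
    (f₂ : Fin (n₂ + 1) → V) (f₃ : Fin (n₃ + 1) → V) : Prop :=
  1 ≤ n₁ ∧ 1 ≤ n₂ ∧ 1 ≤ n₃ ∧
  IsCPath G n₁ f₁ ∧ IsCPath G n₂ f₂ ∧ IsCPath G n₃ f₃ ∧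
  (∀ i j, f₁ i ≠ f₂ j) ∧ (∀ i j, f₁ i ≠ f₃ j) ∧ (∀ i j, f₂ i ≠ f₃ j) ∧
  (∀ i j, G.Adj (f₁ i) (f₂ j) ↔ (i = 0 ∧ j = 0) ∨ (i = Fin.last n₁ ∧ j = Fin.last n₂)) ∧
  (∀ i j, G.Adj (f₁ i) (f₃ j) ↔ (i = 0 ∧ j = 0) ∨ (i = Fin.last n₁ ∧ j = Fin.last n₃)) ∧
  (∀ i j, G.Adj (f₂ i) (f₃ j) ↔ (i = 0 ∧ j = 0) ∨ (i = Fin.last n₂ ∧ j = Fin.last n₃))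

def HasPrism (G : SimpleGraph V) : Prop :=
  ∃ (n₁ n₂ n₃ : ℕ) (f₁ : Fin (n₁ + 1) → V) (f₂ : Fin (n₂ + 1) → V) (f₃ : Fin (n₃ + 1) → V),
    PrismConfig G n₁ n₂ n₃ f₁ f₂ f₃

/-- A pyramid configuration: three chordless paths of length `≥ 1` (two of length `≥ 2`)
from a common apex `f₁ 0` to the triangle `f₁ last, f₂ last, f₃ last`, vertex-disjoint
except at the apex, with no edges between the paths except those of the triangle and
those at the apex. -/
def PyramidConfig (G : SimpleGraph V) (n₁ n₂ n₃ : ℕ) (f₁ : Fin (n₁ + 1) → V)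
    (f₂ : Fin (n₂ + 1) → V) (f₃ : Fin (n₃ + 1) → V) : Prop :=
  1 ≤ n₁ ∧ 1 ≤ n₂ ∧ 1 ≤ n₃ ∧
  ((2 ≤ n₁ ∧ 2 ≤ n₂) ∨ (2 ≤ n₁ ∧ 2 ≤ n₃) ∨ (2 ≤ n₂ ∧ 2 ≤ n₃)) ∧
  IsCPath G n₁ f₁ ∧ IsCPath G n₂ f₂ ∧ IsCPath G n₃ f₃ ∧
  f₂ 0 = f₁ 0 ∧ f₃ 0 = f₁ 0 ∧
  (∀ i j, ¬(i = 0 ∧ j = 0) → f₁ i ≠ f₂ j) ∧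
  (∀ i j, ¬(i = 0 ∧ j = 0) → f₁ i ≠ f₃ j) ∧
  (∀ i j, ¬(i = 0 ∧ j = 0) → f₂ i ≠ f₃ j) ∧
  (∀ i j, i ≠ 0 → j ≠ 0 → (G.Adj (f₁ i) (f₂ j) ↔ (i = Fin.last n₁ ∧ j = Fin.last n₂))) ∧
  (∀ i j, i ≠ 0 → j ≠ 0 → (G.Adj (f₁ i) (f₃ j) ↔ (i = Fin.last n₁ ∧ j = Fin.last n₃))) ∧
  (∀ i j, i ≠ 0 → j ≠ 0 → (G.Adj (f₂ i) (f₃ j) ↔ (i = Fin.last n₂ ∧ j = Fin.last n₃)))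

def HasPyramid (G : SimpleGraph V) : Prop :=
  ∃ (n₁ n₂ n₃ : ℕ) (f₁ : Fin (n₁ + 1) → V) (f₂ : Fin (n₂ + 1) → V) (f₃ : Fin (n₃ + 1) → V),
    PyramidConfig G n₁ n₂ n₃ f₁ f₂ f₃

/-- The class 𝒞 of (square, prism, pyramid, theta, even wheel)-free graphs. -/
def ClassC (G : SimpleGraph V) : Prop :=
  ¬ HasSquare G ∧ ¬ HasPrism G ∧ ¬ HasPyramid G ∧ ¬ HasTheta G ∧ ¬ HasEvenWheel G

/-- `C` separates `a` from `b`: `a, b ∉ C` and every walk from `a` to `b` meets `C`. -/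
def SepSet (G : SimpleGraph V) (C : Set V) (a b : V) : Prop :=
  a ∉ C ∧ b ∉ C ∧ ∀ p : G.Walk a b, ∃ v ∈ p.support, v ∈ C

/-- `C` is a minimal separator of `G`. -/
def IsMinSep (G : SimpleGraph V) (C : Set V) : Prop :=
  ∃ a b, SepSet G C a b ∧ ∀ C' ⊆ C, SepSet G C' a b → C' = C

/-- The set of vertices outside `S` with a neighbor in `S`. -/
def nbd (G : SimpleGraph V) (S : Set V) : Set V := {v | v ∉ S ∧ ∃ u ∈ S, G.Adj u v}

def ConnectedIn (G : SimpleGraph V) (D : Set V) : Prop :=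
  ∀ x ∈ D, ∀ y ∈ D, ∃ p : G.Walk x y, ∀ v ∈ p.support, v ∈ D

/-- `D` is a connected component of `G - C`. -/
def IsCompAvoiding (G : SimpleGraph V) (C D : Set V) : Prop :=
  D.Nonempty ∧ (∀ v ∈ D, v ∉ C) ∧ ConnectedIn G D ∧
    ∀ u ∈ D, ∀ v, v ∉ C → G.Adj u v → v ∈ D

/-- `D` is a full component of `G - C`: every vertex of `C` has a neighbor in `D`. -/
def IsFullComp (G : SimpleGraph V) (C D : Set V) : Prop :=
  IsCompAvoiding G C D ∧ ∀ c ∈ C, ∃ d ∈ D, G.Adj c d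

/-- `G` contains a `k`-semi-induced matching. -/
def HasSemiInducedMatching (G : SimpleGraph V) (k : ℕ) : Prop :=
  ∃ x y : Fin k → V, Function.Injective x ∧ Function.Injective y ∧
    (∀ i j, x i ≠ y j) ∧ ∀ i j, (G.Adj (x i) (y j) ↔ i = j)

/-- `f a` together with all its clones w.r.t. the hole `f`. -/
def CloneSet (G : SimpleGraph V) {n : ℕ} (f : ZMod n → V) (a : ZMod n) : Set V :=
  insert (f a) {u | CloneWrt G f u a}

/-- `f` is a `(C, c₁, c₂)`-hole, where `f p = c₁`, `f q = c₂`, the interior of one arc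
lies in `L` and the interior of the other arc lies in `R`. -/
def IsCHoleAt (G : SimpleGraph V) (C L R : Set V) (c₁ c₂ : V) (n : ℕ)
    (f : ZMod n → V) (p q : ZMod n) : Prop :=
  IsHoleEmb G n f ∧ p ≠ q ∧ f p = c₁ ∧ f q = c₂ ∧
  Set.range f ∩ C = {c₁, c₂} ∧
  (∀ k ∈ arc p q, k ≠ p → k ≠ q → f k ∈ L) ∧
  (∀ k ∈ arc q p, k ≠ p → k ≠ q → f k ∈ R)

/-- `C` is a proper (minimal, non-clique) separator with full components `L` and `R`. -/
def ProperSepWith (G : SimpleGraph V) (C L R : Set V) : Prop :=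
  ¬ G.IsClique C ∧ L ≠ R ∧ IsFullComp G C L ∧ IsFullComp G C R

/-- The `k`-prism: two cliques `{a_1,…,a_k}`, `{b_1,…,b_k}` joined by a perfect matching. -/
def prismGraph (k : ℕ) : SimpleGraph (Fin k ⊕ Fin k) :=
  SimpleGraph.fromRel fun x y =>
    match x, y with
    | .inl _, .inl _ => True
    | .inr _, .inr _ => True
    | .inl i, .inr j => i = j
    | .inr i, .inl j => i = j

/-! Two vertices on the same side are equal or adjacent, so a separator separates some `a_p`
from some `b_q`. Every walk from `a_p` to `b_q` crosses a rung `a_i b_i`, and for each `i` the walk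
`a_p a_i b_i b_q` uses only that rung; so the separators of `a_p` and `b_q` are exactly the sets
avoiding them that meet every rung, and the minimal ones meet every rung exactly once. These are
the sets `{a_i | i ∈ S} ∪ {b_i | i ∉ S}` with `∅ ≠ S ≠ [k]`. -/

open Set Sum

variable {G : SimpleGraph V} {C : Set V} {a b u v : V}

lemma sepSet_comm : SepSet G C a b ↔ SepSet G C b a := by
  refine ⟨fun ⟨ha, hb, hw⟩ => ⟨hb, ha, fun w => ?_⟩, fun ⟨hb, ha, hw⟩ => ⟨ha, hb, fun w => ?_⟩⟩ <;>
  · obtain ⟨x, hx, hxC⟩ := hw w.reverse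
    exact ⟨x, by simpa using hx, hxC⟩

lemma exists_walk_support_subset_of_eq_or_adj (h : a = b ∨ G.Adj a b) :
    ∃ w : G.Walk a b, ∀ x ∈ w.support, x = a ∨ x = b := by
  rcases h with rfl | h
  · exact ⟨.nil, by simp⟩
  · exact ⟨h.toWalk, by simp⟩

lemma not_sepSet_of_eq_or_adj (h : a = b ∨ G.Adj a b) : ¬ SepSet G C a b := by
  rintro ⟨ha, hb, hw⟩
  obtain ⟨w, hws⟩ := exists_walk_support_subset_of_eq_or_adj h
  obtain ⟨x, hx, hxC⟩ := hw w
  rcases hws x hx with rfl | rfl <;> contradiction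

lemma SepSet.mem_or_mem_of_adj (hsep : SepSet G C a b) (hau : a = u ∨ G.Adj a u)
    (huv : G.Adj u v) (hvb : v = b ∨ G.Adj v b) : u ∈ C ∨ v ∈ C := by
  obtain ⟨ha, hb, hw⟩ := hsep
  obtain ⟨w₁, hw₁⟩ := exists_walk_support_subset_of_eq_or_adj hau
  obtain ⟨w₂, hw₂⟩ := exists_walk_support_subset_of_eq_or_adj hvb
  obtain ⟨x, hx, hxC⟩ := hw (w₁.append (.cons huv w₂))
  rw [Walk.mem_support_append_iff, Walk.support_cons, List.mem_cons] at hx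
  rcases hx with hx | rfl | hx
  · rcases hw₁ x hx with rfl | rfl <;> tauto
  · exact .inl hxC
  · rcases hw₂ x hx with rfl | rfl <;> tauto

lemma ncard_nonempty_ne_univ {α : Type*} [Fintype α] :
    {S : Set α | S.Nonempty ∧ S ≠ univ}.ncard = 2 ^ Fintype.card α - 2 := by
  rcases isEmpty_or_nonempty α with hα | hα
  · simp [Set.Nonempty]
  have hcompl : {S : Set α | S.Nonempty ∧ S ≠ univ} = {∅, univ}ᶜ := by
    ext S
    simp [nonempty_iff_ne_empty]
  rw [hcompl, ncard_compl, ncard_pair empty_ne_univ, Nat.card_eq_fintype_card,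
    Fintype.card_set]

namespace prismGraph

variable {k : ℕ} {i j p q : Fin k}

@[simp] lemma adj_inl_inl : (prismGraph k).Adj (inl i) (inl j) ↔ i ≠ j := by
  simp [prismGraph]

@[simp] lemma adj_inr_inr : (prismGraph k).Adj (inr i) (inr j) ↔ i ≠ j := by
  simp [prismGraph]

@[simp] lemma adj_inl_inr : (prismGraph k).Adj (inl i) (inr j) ↔ i = j := by
  simp [prismGraph, eq_comm]

lemma eq_or_adj_inl : (inl i : Fin k ⊕ Fin k) = inl j ∨ (prismGraph k).Adj (inl i) (inl j) := by
  by_cases h : i = j <;> simp [h]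

lemma eq_or_adj_inr : (inr i : Fin k ⊕ Fin k) = inr j ∨ (prismGraph k).Adj (inr i) (inr j) := by
  by_cases h : i = j <;> simp [h]

lemma sepSet_inl_inr_iff {C : Set (Fin k ⊕ Fin k)} :
    SepSet (prismGraph k) C (inl p) (inr q) ↔
      inl p ∉ C ∧ inr q ∉ C ∧ ∀ i, inl i ∈ C ∨ inr i ∈ C := by
  refine ⟨fun hsep => ⟨hsep.1, hsep.2.1, fun i => ?_⟩, fun ⟨hp, hq, hrung⟩ => ⟨hp, hq, fun w => ?_⟩⟩
  · exact hsep.mem_or_mem_of_adj eq_or_adj_inl (adj_inl_inr.2 rfl) eq_or_adj_inr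
  · obtain ⟨d, hd, hfst, hsnd⟩ := w.exists_boundary_dart (range inl) ⟨p, rfl⟩ (by simp)
    obtain ⟨⟨x, y⟩, hxy⟩ := d
    obtain ⟨i, rfl⟩ := hfst
    obtain ⟨j, rfl⟩ : ∃ j, y = inr j := by cases y <;> simp_all
    obtain rfl : i = j := adj_inl_inr.1 hxy
    rcases hrung i with h | h
    · exact ⟨_, w.dart_fst_mem_support_of_mem_darts hd, h⟩
    · exact ⟨_, w.dart_snd_mem_support_of_mem_darts hd, h⟩

end prismGraph

/-- `{a_i | i ∈ S} ∪ {b_i | i ∉ S}`, where `a_i = inl i` and `b_i = inr i`. -/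
def prismSeparator {k : ℕ} (S : Set (Fin k)) : Set (Fin k ⊕ Fin k) :=
  {v | v.elim (· ∈ S) (· ∉ S)}

namespace prismSeparator

variable {k : ℕ} {S : Set (Fin k)} {i p q : Fin k}

@[simp] lemma inl_mem : inl i ∈ prismSeparator S ↔ i ∈ S := Iff.rfl

@[simp] lemma inr_mem : inr i ∈ prismSeparator S ↔ i ∉ S := Iff.rfl

lemma injective : Function.Injective (prismSeparator (k := k)) := fun S T h =>
  ext fun i => by simpa using congrArg (inl i ∈ ·) h

open prismGraph in
lemma isMinSep (hp : p ∉ S) (hq : q ∈ S) : IsMinSep (prismGraph k) (prismSeparator S) := by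
  refine ⟨inl p, inr q, sepSet_inl_inr_iff.2 ⟨hp, not_not.2 hq, fun i => em (i ∈ S)⟩,
    fun C hC hsep => hC.antisymm fun v hv => ?_⟩
  obtain ⟨-, -, hrung⟩ := sepSet_inl_inr_iff.1 hsep
  cases v with
  | inl i => exact (hrung i).resolve_right fun h => inr_mem.1 (hC h) hv
  | inr i => exact (hrung i).resolve_left fun h => hv (inl_mem.1 (hC h))

end prismSeparator

open prismGraph in
lemma eq_prismSeparator_of_minimal {k : ℕ} {C : Set (Fin k ⊕ Fin k)} {p q : Fin k}
    (hsep : SepSet (prismGraph k) C (inl p) (inr q))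
    (hmin : ∀ C' ⊆ C, SepSet (prismGraph k) C' (inl p) (inr q) → C' = C) :
    C = prismSeparator {i | inl i ∈ C} := by
  obtain ⟨hp, hq, hrung⟩ := sepSet_inl_inr_iff.1 hsep
  have hnot_both (i : Fin k) (hl : inl i ∈ C) (hr : inr i ∈ C) : False := by
    have hsep' : SepSet (prismGraph k) (C \ {inl i}) (inl p) (inr q) := by
      refine sepSet_inl_inr_iff.2 ⟨fun h => hp h.1, fun h => hq h.1, fun j => ?_⟩
      rcases eq_or_ne j i with rfl | hji
      · exact .inr ⟨hr, by simp⟩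
      · exact (hrung j).imp (fun h => ⟨h, by simpa using hji⟩) fun h => ⟨h, by simp⟩
    exact (hmin _ sdiff_subset hsep' ▸ hl).2 rfl
  ext (i | i)
  · rfl
  · exact ⟨fun hr hl => hnot_both i hl hr, (hrung i).resolve_left⟩

open prismGraph in
lemma IsMinSep.exists_eq_prismSeparator {k : ℕ} {C : Set (Fin k ⊕ Fin k)}
    (h : IsMinSep (prismGraph k) C) :
    ∃ S : Set (Fin k), S.Nonempty ∧ S ≠ univ ∧ C = prismSeparator S := by
  obtain ⟨p, q, hsep, hmin⟩ : ∃ p q, SepSet (prismGraph k) C (inl p) (inr q) ∧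
      ∀ C' ⊆ C, SepSet (prismGraph k) C' (inl p) (inr q) → C' = C := by
    obtain ⟨a | a, b | b, hsep, hmin⟩ := h
    · exact (not_sepSet_of_eq_or_adj eq_or_adj_inl hsep).elim
    · exact ⟨a, b, hsep, hmin⟩
    · simp only [sepSet_comm (a := inr a)] at hsep hmin
      exact ⟨b, a, hsep, hmin⟩
    · exact (not_sepSet_of_eq_or_adj eq_or_adj_inr hsep).elim
  have hC := eq_prismSeparator_of_minimal hsep hmin
  obtain ⟨hp, hq, -⟩ := sepSet_inl_inr_iff.1 hsep
  refine ⟨_, ⟨q, ?_⟩, (ne_univ_iff_exists_notMem _).2 ⟨p, hp⟩, hC⟩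
  rw [hC] at hq
  simpa using hq

theorem prism_minimal_separators_general (k : ℕ) :
    {C : Set (Fin k ⊕ Fin k) | IsMinSep (prismGraph k) C}.ncard = 2 ^ k - 2 := by
  have hsep : {C | IsMinSep (prismGraph k) C} =
      prismSeparator '' {S : Set (Fin k) | S.Nonempty ∧ S ≠ univ} := by
    ext C
    refine ⟨fun h => ?_, ?_⟩
    · obtain ⟨S, hne, hU, rfl⟩ := h.exists_eq_prismSeparator
      exact ⟨S, ⟨hne, hU⟩, rfl⟩
    · rintro ⟨S, ⟨⟨q, hq⟩, hU⟩, rfl⟩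
      obtain ⟨p, hp⟩ := (ne_univ_iff_exists_notMem S).1 hU
      exact prismSeparator.isMinSep hp hq
  rw [hsep, ncard_image_of_injective _ prismSeparator.injective, ncard_nonempty_ne_univ,
    Fintype.card_fin]

/-- For every `k ≥ 1`, the `k`-prism has exactly `2^k - 2` minimal separators. -/
theorem prism_minimal_separators (k : ℕ) (hk : 1 ≤ k) :
    {C : Set (Fin k ⊕ Fin k) | IsMinSep (prismGraph k) C}.ncard = 2 ^ k - 2 :=
  prism_minimal_separators_general k
end

section
/- Let G be a graph on n vertices that contains no k-semi-induced matching as an induced subgraph. Then every minimal separator C of G satisfies C = N(X_A) ∩ N(X_B) for some sets X_A, X_B of vertices each of cardinality less than k. Consequently G has at most k^2·n^{2k−2} minimal separators. -/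
open SimpleGraph

variable {V : Type*}

/-! Let `C` be a minimal separator with full components `A` and `B`. Choose `X_A ⊆ A` minimal
with `C ⊆ N(X_A)`: every `x ∈ X_A` then has a private neighbour in `C`, and `k` of these pairs
would form a `k`-semi-induced matching, so `|X_A| < k`; likewise for `B`. A vertex of
`N(X_A) ∩ N(X_B)` outside `C` would lie in both `A` and `B`, hence `C = N(X_A) ∩ N(X_B)`, and
`C ↦ (X_A, X_B)` is injective. -/

section SemiInducedMatching

variable {G : SimpleGraph V} {k : ℕ}

theorem hasSemiInducedMatching_of_privateNeighbors {X C : Set V} (hX : X.Finite)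
    (hk : k ≤ X.ncard) (hXC : Disjoint X C)
    (hpriv : ∀ x ∈ X, ∃ c ∈ C, G.Adj x c ∧ ∀ x' ∈ X, G.Adj x' c → x' = x) :
    HasSemiInducedMatching G k := by
  have : Finite X := hX
  choose c hcC hadj huniq using hpriv
  let e : Fin k ↪ X := (Fin.castLEEmb (hk.trans_eq (Nat.card_coe_set_eq X).symm)).trans
    (Finite.equivFin X).symm.toEmbedding
  have hmatch : ∀ i j, G.Adj (e i) (c (e j) (e j).2) ↔ i = j := fun i j =>
    ⟨fun h => e.injective (Subtype.ext (huniq _ _ _ (e i).2 h)), fun h => h ▸ hadj _ _⟩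
  refine ⟨fun i => e i, fun i => c (e i) (e i).2, Subtype.val_injective.comp e.injective,
    fun i j hij => ?_, fun i j => hXC.ne_of_mem (e i).2 (hcC _ _), hmatch⟩
  simp only at hij
  exact (hmatch i j).1 (hij ▸ hadj _ _)

theorem exists_subset_ncard_lt_subset_nbd [Finite V] {A C : Set V}
    (hfree : ¬ HasSemiInducedMatching G k) (hC : C ⊆ nbd G A) :
    ∃ X ⊆ A, X.ncard < k ∧ C ⊆ nbd G X := by
  obtain ⟨X, ⟨hXA, hCX⟩, hmin⟩ :=
    wellFounded_lt.has_min {X : Set V | X ⊆ A ∧ C ⊆ nbd G X} ⟨A, subset_rfl, hC⟩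
  refine ⟨X, hXA, ?_, hCX⟩
  by_contra! hk
  refine hfree (hasSemiInducedMatching_of_privateNeighbors X.toFinite hk
    (Set.disjoint_right.2 fun c hc => (hCX hc).1) fun x hx => ?_)
  have hsmaller : ¬ (X \ {x} ⊆ A ∧ C ⊆ nbd G (X \ {x})) := fun h =>
    hmin _ h (Set.sdiff_singleton_ssubset.2 hx)
  obtain ⟨c, hc, hcx⟩ := Set.not_subset.1 fun h => hsmaller ⟨Set.sdiff_subset.trans hXA, h⟩
  obtain ⟨hcX, u, hu, huc⟩ := hCX hc
  have honly : ∀ x' ∈ X, G.Adj x' c → x' = x := fun x' hx' h => by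
    by_contra hne
    exact hcx ⟨fun h' => hcX h'.1, x', ⟨hx', hne⟩, h⟩
  exact ⟨c, hc, honly u hu huc ▸ huc, honly⟩

end SemiInducedMatching

section Separators

variable {G : SimpleGraph V} {A B C X Y : Set V} {a b u v : V}

/-- The vertex set of the component of `a` in `G - C` (empty if `a ∈ C`). -/
def reachAvoiding (G : SimpleGraph V) (C : Set V) (a : V) : Set V :=
  {v | ∃ p : G.Walk a v, ∀ x ∈ p.support, x ∉ C}

theorem notMem_of_mem_reachAvoiding (hv : v ∈ reachAvoiding G C a) : v ∉ C :=
  let ⟨p, hp⟩ := hv; hp v p.end_mem_support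

theorem mem_reachAvoiding_of_adj (hu : u ∈ reachAvoiding G C a) (hv : v ∉ C)
    (huv : G.Adj u v) : v ∈ reachAvoiding G C a := by
  obtain ⟨p, hp⟩ := hu
  refine ⟨p.concat huv, fun x hx => ?_⟩
  rcases List.mem_append.1 (p.support_concat huv ▸ hx) with hx | hx
  · exact hp x hx
  · exact List.mem_singleton.1 hx ▸ hv

theorem nbd_reachAvoiding_subset : nbd G (reachAvoiding G C a) ⊆ C := fun _ ⟨hv, _, hu, huv⟩ =>
  by_contra fun hvC => hv (mem_reachAvoiding_of_adj hu hvC huv)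

theorem SepSet.symm (h : SepSet G C a b) : SepSet G C b a := by
  refine ⟨h.2.1, h.1, fun p => ?_⟩
  obtain ⟨v, hv, hvC⟩ := h.2.2 p.reverse
  rw [Walk.support_reverse, List.mem_reverse] at hv
  exact ⟨v, hv, hvC⟩

theorem SepSet.disjoint_reachAvoiding (h : SepSet G C a b) :
    Disjoint (reachAvoiding G C a) (reachAvoiding G C b) := by
  refine Set.disjoint_left.2 fun v ⟨p, hp⟩ ⟨q, hq⟩ => ?_
  obtain ⟨x, hx, hxC⟩ := h.2.2 (p.append q.reverse)
  rcases (Walk.mem_support_append_iff _ _).1 hx with hx | hx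
  · exact hp x hx hxC
  · rw [Walk.support_reverse, List.mem_reverse] at hx
    exact hq x hx hxC

/-- Minimality of `C` is what puts every vertex of `C` next to the component of `a`: a path
from `a` to `b` avoiding `C \ {c}` leaves that component through `c`. -/
theorem SepSet.subset_nbd_reachAvoiding (hsep : SepSet G C a b)
    (hmin : ∀ C' ⊆ C, SepSet G C' a b → C' = C) : C ⊆ nbd G (reachAvoiding G C a) := by
  intro c hc
  refine ⟨fun h => notMem_of_mem_reachAvoiding h hc, ?_⟩
  have hnot : ¬ SepSet G (C \ {c}) a b := fun h =>
    Set.notMem_sdiff_of_mem (Set.mem_singleton c) (by rw [hmin _ Set.sdiff_subset h]; exact hc)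
  simp only [SepSet, not_and] at hnot
  obtain ⟨p, hp⟩ := not_forall.1 <| hnot (fun h => hsep.1 h.1) (fun h => hsep.2.1 h.1)
  have ha : a ∈ reachAvoiding G C a := ⟨Walk.nil, by simpa using hsep.1⟩
  have hb : b ∉ reachAvoiding G C a := fun ⟨q, hq⟩ =>
    let ⟨v, hv, hvC⟩ := hsep.2.2 q; hq v hv hvC
  obtain ⟨d, hd, hfst, hsnd⟩ := p.exists_boundary_dart (reachAvoiding G C a) ha hb
  have hsndC : d.snd ∈ C := by_contra fun h => hsnd (mem_reachAvoiding_of_adj hfst h d.adj)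
  have hsndc : d.snd = c := by
    by_contra hne
    exact hp ⟨d.snd, p.dart_snd_mem_support_of_mem_darts hd, hsndC, hne⟩
  exact ⟨d.fst, hfst, hsndc ▸ d.adj⟩

theorem IsMinSep.exists_disjoint_nbd_eq (h : IsMinSep G C) :
    ∃ A B, Disjoint A B ∧ nbd G A = C ∧ nbd G B = C := by
  obtain ⟨a, b, hsep, hmin⟩ := h
  have hmin' : ∀ C' ⊆ C, SepSet G C' b a → C' = C := fun C' hC' h =>
    hmin C' hC' h.symm
  exact ⟨_, _, hsep.disjoint_reachAvoiding,
    nbd_reachAvoiding_subset.antisymm (hsep.subset_nbd_reachAvoiding hmin),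
    nbd_reachAvoiding_subset.antisymm (hsep.symm.subset_nbd_reachAvoiding hmin')⟩

theorem mem_of_mem_nbd_of_nbd_subset (hA : nbd G A ⊆ C) (hXA : X ⊆ A) (hv : v ∈ nbd G X)
    (hvC : v ∉ C) : v ∈ A := by
  obtain ⟨-, u, hu, huv⟩ := hv
  by_contra hvA
  exact hvC (hA ⟨hvA, u, hXA hu, huv⟩)

theorem eq_nbd_inter_nbd (hAB : Disjoint A B) (hA : nbd G A ⊆ C) (hB : nbd G B ⊆ C)
    (hXA : X ⊆ A) (hYB : Y ⊆ B) (hCX : C ⊆ nbd G X) (hCY : C ⊆ nbd G Y) :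
    C = nbd G X ∩ nbd G Y := by
  refine (Set.subset_inter hCX hCY).antisymm fun v ⟨hvX, hvY⟩ => by_contra fun hvC => ?_
  exact hAB.ne_of_mem (mem_of_mem_nbd_of_nbd_subset hA hXA hvX hvC)
    (mem_of_mem_nbd_of_nbd_subset hB hYB hvY hvC) rfl

theorem IsMinSep.exists_eq_nbd_inter_nbd [Finite V] {k : ℕ}
    (hfree : ¬ HasSemiInducedMatching G k) (hC : IsMinSep G C) :
    ∃ XA XB : Set V, XA.ncard < k ∧ XB.ncard < k ∧ C = nbd G XA ∩ nbd G XB := by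
  obtain ⟨A, B, hAB, hA, hB⟩ := hC.exists_disjoint_nbd_eq
  obtain ⟨XA, hXA, hXAk, hCXA⟩ := exists_subset_ncard_lt_subset_nbd hfree hA.ge
  obtain ⟨XB, hXB, hXBk, hCXB⟩ := exists_subset_ncard_lt_subset_nbd hfree hB.ge
  exact ⟨XA, XB, hXAk, hXBk, eq_nbd_inter_nbd hAB hA.le hB.le hXA hXB hCXA hCXB⟩

end Separators

theorem ncard_setOf_ncard_lt_le [Fintype V] [Nonempty V] (k : ℕ) :
    {X : Set V | X.ncard < k}.ncard ≤ k * Fintype.card V ^ (k - 1) := by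
  classical
  let T : Finset (Finset V) :=
    (Finset.range k).biUnion fun i => (Finset.univ : Finset V).powersetCard i
  have hsub : {X : Set V | X.ncard < k} ⊆ ((↑) : Finset V → Set V) '' T := fun X hX => by
    refine ⟨X.toFinset, ?_, Set.coe_toFinset X⟩
    simp only [T, Finset.coe_biUnion, Finset.coe_range, Set.mem_iUnion, Finset.mem_coe,
      Finset.mem_powersetCard_univ]
    exact ⟨X.ncard, hX, (Set.ncard_eq_toFinset_card' X).symm⟩
  calc {X : Set V | X.ncard < k}.ncard ≤ T.card :=
        (Set.ncard_le_ncard hsub (Set.toFinite _)).trans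
          ((Set.ncard_image_le T.finite_toSet).trans_eq (Set.ncard_coe_finset T))
    _ ≤ ∑ i ∈ Finset.range k, ((Finset.univ : Finset V).powersetCard i).card :=
        Finset.card_biUnion_le
    _ = ∑ i ∈ Finset.range k, (Fintype.card V).choose i := by
        simp only [Finset.card_powersetCard, Finset.card_univ]
    _ ≤ ∑ _i ∈ Finset.range k, Fintype.card V ^ (k - 1) := Finset.sum_le_sum fun i hi =>
        (Nat.choose_le_pow _ _).trans (Nat.pow_le_pow_right Fintype.card_pos
          (Nat.le_sub_one_of_lt (Finset.mem_range.1 hi)))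
    _ = k * Fintype.card V ^ (k - 1) := by simp

theorem ncard_setOf_isMinSep_le [Fintype V] {G : SimpleGraph V} {k : ℕ}
    (hfree : ¬ HasSemiInducedMatching G k) :
    {C : Set V | IsMinSep G C}.ncard ≤ k ^ 2 * Fintype.card V ^ (2 * k - 2) := by
  rcases isEmpty_or_nonempty V with hV | hV
  · simp [IsMinSep]
  choose! XA XB hXA hXB hC using fun C (hC : IsMinSep G C) => hC.exists_eq_nbd_inter_nbd hfree
  let S : Set (Set V) := {X | X.ncard < k}
  calc {C : Set V | IsMinSep G C}.ncard ≤ (S ×ˢ S).ncard :=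
        Set.ncard_le_ncard_of_injOn (fun C => (XA C, XB C)) (fun C h => ⟨hXA C h, hXB C h⟩)
          (fun C₁ h₁ C₂ h₂ h => by
            obtain ⟨hA, hB⟩ := Prod.mk.inj h
            rw [hC C₁ h₁, hC C₂ h₂, hA, hB])
          (Set.toFinite _)
    _ = S.ncard * S.ncard := Set.ncard_prod
    _ ≤ (k * Fintype.card V ^ (k - 1)) * (k * Fintype.card V ^ (k - 1)) := by
        gcongr <;> exact ncard_setOf_ncard_lt_le k
    _ = k ^ 2 * Fintype.card V ^ (2 * k - 2) := by
        rw [show 2 * k - 2 = (k - 1) + (k - 1) by omega]; ring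

/-- In a graph on `n` vertices with no `k`-semi-induced matching, every minimal separator
is `N(X_A) ∩ N(X_B)` for sets `X_A, X_B` of size `< k`; consequently there are at most
`k² · n^(2k-2)` minimal separators. -/
theorem minSep_of_no_semiInducedMatching {V : Type*} [Fintype V] (G : SimpleGraph V)
    (n k : ℕ) (hn : Fintype.card V = n) (hfree : ¬ HasSemiInducedMatching G k) :
    (∀ C : Set V, IsMinSep G C →
      ∃ XA XB : Set V, XA.ncard < k ∧ XB.ncard < k ∧ C = nbd G XA ∩ nbd G XB) ∧
    {C : Set V | IsMinSep G C}.ncard ≤ k ^ 2 * n ^ (2 * k - 2) :=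
  ⟨fun _ hC => hC.exists_eq_nbd_inter_nbd hfree, hn ▸ ncard_setOf_isMinSep_le hfree⟩
end

section
/- Let G be a graph without a k-semi-induced matching, let a, b be non-adjacent vertices, let C be a minimal (a,b)-separator, and let A be the component of G − C containing a. If X_A ⊆ A is an inclusion-wise minimal set with C ⊆ N(X_A), then |X_A| < k. -/
open SimpleGraph

variable {V : Type*}

/-!
Minimality of `X_A` gives every `x ∈ X_A` a private neighbour `c_x ∈ C`: a vertex adjacent
to `x` and to no other vertex of `X_A` (otherwise `X_A \ {x}` would still dominate `C`).
The pairs `(x, c_x)` form a semi-induced matching of size `|X_A|`.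
-/

theorem Set.nonempty_fin_embedding_of_le_ncard {α : Type*} {s : Set α} {k : ℕ}
    (hk : k ≤ s.ncard) : Nonempty (Fin k ↪ s) := by
  obtain ⟨y, -⟩ := Fin.Embedding.exists_embedding_disjoint_range_of_add_le_ENat_card
    (s := (∅ : Set s)) (n := k) (by
      rw [Set.ncard_empty, ENat.card_coe_set_eq, Nat.cast_zero, zero_add]
      exact (Nat.cast_le.mpr hk).trans (Set.ncard_le_encard s))
  exact ⟨y⟩

def IsPrivateNbr (G : SimpleGraph V) (X : Set V) (x c : V) : Prop :=
  c ∉ X ∧ G.Adj x c ∧ ∀ u ∈ X, G.Adj u c → u = x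

theorem exists_isPrivateNbr_of_minimal_cover {G : SimpleGraph V} {C X : Set V}
    (hcov : C ⊆ nbd G X) (hmin : ∀ X' ⊆ X, C ⊆ nbd G X' → X' = X) {x : V} (hx : x ∈ X) :
    ∃ c ∈ C, IsPrivateNbr G X x c := by
  have hnot_cov : ¬ C ⊆ nbd G (X \ {x}) := fun h =>
    (Set.sdiff_singleton_ssubset.mpr hx).ne (hmin _ Set.sdiff_subset h)
  obtain ⟨c, hcC, hc_not⟩ := Set.not_subset.mp hnot_cov
  obtain ⟨hcX, u, huX, huc⟩ := hcov hcC
  have honly : ∀ v ∈ X, G.Adj v c → v = x := fun v hv hvc =>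
    by_contra fun hvx => hc_not ⟨fun h => hcX h.1, v, ⟨hv, hvx⟩, hvc⟩
  exact ⟨c, hcC, hcX, honly u huX huc ▸ huc, honly⟩

theorem hasSemiInducedMatching_of_forall_exists_isPrivateNbr {G : SimpleGraph V} {X : Set V}
    (hpriv : ∀ x ∈ X, ∃ c, IsPrivateNbr G X x c) {k : ℕ} (hk : k ≤ X.ncard) :
    HasSemiInducedMatching G k := by
  obtain ⟨e⟩ := Set.nonempty_fin_embedding_of_le_ncard hk
  choose c hcX hadj honly using fun i => hpriv (e i) (e i).2
  have hx_inj : Function.Injective fun i => (e i : V) :=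
    Subtype.val_injective.comp e.injective
  have hmatch : ∀ i j, G.Adj (e i) (c j) ↔ i = j := fun i j =>
    ⟨fun h => hx_inj (honly j (e i) (e i).2 h), fun h => h ▸ hadj i⟩
  refine ⟨fun i => e i, c, hx_inj, fun i j hij => ?_, fun i j h => ?_, hmatch⟩
  · exact (hmatch i j).mp (hij ▸ hadj i)
  · exact hcX j (h ▸ (e i).2)

theorem minimal_covering_set_small_general {V : Type*} (G : SimpleGraph V) (k : ℕ)
    (hfree : ¬ HasSemiInducedMatching G k)
    (C : Set V)
    (XA : Set V)
    (hcov : C ⊆ nbd G XA)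
    (hminX : ∀ X' ⊆ XA, C ⊆ nbd G X' → X' = XA) :
    XA.ncard < k := by
  have hpriv : ∀ x ∈ XA, ∃ c, IsPrivateNbr G XA x c := fun x hx =>
    (exists_isPrivateNbr_of_minimal_cover hcov hminX hx).imp fun _ hc => hc.2
  by_contra! hk
  exact hfree (hasSemiInducedMatching_of_forall_exists_isPrivateNbr hpriv hk)

/-- If `G` has no `k`-semi-induced matching, `C` is a minimal `(a,b)`-separator,
`A` is the component of `G - C` containing `a`, and `X_A ⊆ A` is inclusion-wise minimal
with `C ⊆ N(X_A)`, then `|X_A| < k`. -/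
theorem minimal_covering_set_small {V : Type*} [Fintype V] (G : SimpleGraph V) (k : ℕ)
    (hfree : ¬ HasSemiInducedMatching G k) (a b : V) (hnadj : ¬ G.Adj a b)
    (C : Set V) (hsep : SepSet G C a b)
    (hmin : ∀ C' ⊆ C, SepSet G C' a b → C' = C)
    (XA : Set V)
    (hXA : XA ⊆ {v | ∃ p : G.Walk a v, ∀ w ∈ p.support, w ∉ C})
    (hcov : C ⊆ nbd G XA)
    (hminX : ∀ X' ⊆ XA, C ⊆ nbd G X' → X' = XA) :
    XA.ncard < k :=
  minimal_covering_set_small_general G k hfree C XA hcov hminX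
end

section
/- Every even wheel contains an even hole. -/
open SimpleGraph

variable {V : Type*}

/-!
An odd rim is split by the `2k` neighbours of the center into `2k` sectors whose lengths add up
to the length of the rim, so one of them has even length `L`. Since the center has at least three
neighbours, `L ≤ n - 2`, so this sector is a chordless path which, closed up through the center,
is a hole of even length `L + 2`. An even rim is itself an even hole.
-/

namespace ZMod

theorem eq_add_one_iff_val {m : ℕ} [NeZero m] (i j : ZMod m) :
    j = i + 1 ↔ j.val = i.val + 1 ∨ (j.val = 0 ∧ i.val + 1 = m) := by
  have hi := i.val_lt
  have hj := j.val_lt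
  rw [← (val_injective m).eq_iff, val_add, val_one_eq_one_mod, Nat.add_mod_mod]
  rcases (Nat.succ_le_of_lt hi).lt_or_eq with h | h
  · rw [Nat.mod_eq_of_lt h]; omega
  · rw [← Nat.succ_eq_add_one, h, Nat.mod_self]; omega

theorem natCast_inj_of_lt {n a b : ℕ} (ha : a < n) (hb : b < n) :
    (a : ZMod n) = b ↔ a = b := by
  rw [natCast_eq_natCast_iff', Nat.mod_eq_of_lt ha, Nat.mod_eq_of_lt hb]

end ZMod

namespace Finset

theorem sub_mod_two_eq_of_odd_gaps {T : Finset ℕ} {a b : ℕ} (ha : a ∈ T) (hb : b ∈ T)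
    (hT : ∀ c ∈ T, a ≤ c ∧ c ≤ b)
    (hodd : ∀ x ∈ T, ∀ y ∈ T, x < y → (∀ c ∈ T, c ≤ x ∨ y ≤ c) → Odd (y - x)) :
    (b - a) % 2 = (T.card - 1) % 2 := by
  induction T using Finset.induction_on_max generalizing b with
  | empty => simp at ha
  | insert m s hlt ih =>
    have hbm : b = m := by
      rcases mem_insert.1 hb with rfl | hbs
      · rfl
      · exact absurd (hT m (mem_insert_self m s)).2 (hlt b hbs).not_ge
    subst hbm
    rcases s.eq_empty_or_nonempty with rfl | hs
    · simp_all
    have has : a ∈ s := by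
      obtain ⟨c, hc⟩ := hs
      refine (mem_insert.1 ha).resolve_left fun hab => ?_
      exact (hlt c hc).not_ge (hab ▸ (hT c (mem_insert_of_mem hc)).1)
    have hsmax : ∀ c ∈ s, a ≤ c ∧ c ≤ s.max' hs :=
      fun c hc => ⟨(hT c (mem_insert_of_mem hc)).1, le_max' s c hc⟩
    have hmax := hlt _ (max'_mem s hs)
    have hlast : Odd (b - s.max' hs) := by
      refine hodd _ (mem_insert_of_mem (max'_mem s hs)) _ (mem_insert_self _ _) hmax ?_
      intro c hc
      rcases mem_insert.1 hc with rfl | hcs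
      · exact Or.inr le_rfl
      · exact Or.inl (le_max' s c hcs)
    have hs_odd : ∀ x ∈ s, ∀ y ∈ s, x < y → (∀ c ∈ s, c ≤ x ∨ y ≤ c) → Odd (y - x) := by
      intro x hx y hy hxy hxy'
      refine hodd x (mem_insert_of_mem hx) y (mem_insert_of_mem hy) hxy fun c hc => ?_
      rcases mem_insert.1 hc with rfl | hcs
      · exact Or.inr (hlt y hy).le
      · exact hxy' c hcs
    have ih' := ih has (max'_mem s hs) hsmax hs_odd
    have hcard := card_insert_of_notMem fun hbs => (hlt b hbs).false
    have hpos := s.card_pos.2 hs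
    have hle := (hsmax a has).2
    obtain ⟨k, hk⟩ := hlast
    rw [hcard]
    omega

theorem exists_even_gap {T : Finset ℕ} {a b : ℕ} (ha : a ∈ T) (hb : b ∈ T)
    (hT : ∀ c ∈ T, a ≤ c ∧ c ≤ b) (hpar : (b - a) % 2 ≠ (T.card - 1) % 2) :
    ∃ x ∈ T, ∃ y ∈ T, x < y ∧ Even (y - x) ∧ ∀ c ∈ T, c ≤ x ∨ y ≤ c := by
  by_contra! h
  refine hpar (sub_mod_two_eq_of_odd_gaps ha hb hT fun x hx y hy hxy hgap => ?_)
  refine Nat.not_even_iff_odd.1 fun he => ?_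
  obtain ⟨c, hc, hxc, hcy⟩ := h x hx y hy hxy he
  rcases hgap c hc with hcx | hyc <;> omega

theorem card_add_gap_le {T : Finset ℕ} {n x y : ℕ} (hT : ∀ c ∈ T, c ≤ n) (hxy : x < y)
    (hy : y ≤ n) (hgap : ∀ c ∈ T, c ≤ x ∨ y ≤ c) : T.card + (y - x) ≤ n + 2 := by
  have hsub : T ⊆ range (x + 1) ∪ Ico y (n + 1) := by
    intro c hc
    have := hT c hc
    rcases hgap c hc with h | h
    · exact mem_union_left _ (mem_range.2 (by omega))
    · exact mem_union_right _ (mem_Ico.2 ⟨h, by omega⟩)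
  have := (card_le_card hsub).trans (card_union_le _ _)
  rw [card_range, Nat.card_Ico] at this
  omega

end Finset

section Holes

variable {V : Type*} {G : SimpleGraph V}

theorem IsHoleEmb.isCPath_arc {n : ℕ} {f : ZMod n → V} (hf : IsHoleEmb G n f) (i : ZMod n)
    {L : ℕ} (hL : L + 2 ≤ n) : IsCPath G L (fun k : Fin (L + 1) => f (i + (k : ℕ))) := by
  obtain ⟨-, hinj, hadj⟩ := hf
  refine ⟨fun a b hab => Fin.ext ?_, fun a b => ?_⟩
  · exact (ZMod.natCast_inj_of_lt (by omega) (by omega)).1 (add_left_cancel (hinj hab))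
  · simp only [hadj, add_assoc, add_right_inj]
    rw [← Nat.cast_succ, ← Nat.cast_succ, ZMod.natCast_inj_of_lt (by omega) (by omega),
      ZMod.natCast_inj_of_lt (by omega) (by omega)]
    omega

theorem IsCPath.isHoleEmb_close {L : ℕ} {g : Fin (L + 1) → V} {v : V} (hg : IsCPath G L g)
    (hL : 2 ≤ L) (hv : v ∉ Set.range g) (hvg : ∀ k, G.Adj v (g k) ↔ k = 0 ∨ k = Fin.last L) :
    IsHoleEmb G (L + 2)
      (fun k : ZMod (L + 2) => if h : k.val < L + 1 then g ⟨k.val, h⟩ else v) := by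
  refine ⟨by omega, fun a b hab => ZMod.val_injective _ ?_, fun a b => ?_⟩
  · have := a.val_lt
    have := b.val_lt
    dsimp only at hab
    split_ifs at hab with ha hb hb
    · exact Fin.mk.inj (hg.1 hab)
    · exact absurd ⟨_, hab⟩ hv
    · exact absurd ⟨_, hab.symm⟩ hv
    · omega
  · have := a.val_lt
    have := b.val_lt
    rw [ZMod.eq_add_one_iff_val, ZMod.eq_add_one_iff_val]
    dsimp only
    split_ifs with ha hb hb
    · rw [hg.2]
      dsimp only
      omega
    · rw [G.adj_comm, hvg, Fin.ext_iff, Fin.ext_iff]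
      simp only [Fin.val_zero, Fin.val_last]
      omega
    · rw [hvg, Fin.ext_iff, Fin.ext_iff]
      simp only [Fin.val_zero, Fin.val_last]
      omega
    · simp only [SimpleGraph.irrefl, false_iff]
      omega

theorem IsHoleEmb.exists_isHoleEmb_of_sector {n : ℕ} {f : ZMod n → V} (hf : IsHoleEmb G n f)
    {v : V} (hv : v ∉ Set.range f) (i : ZMod n) {L : ℕ} (hL : 2 ≤ L) (hLn : L + 2 ≤ n)
    (hvf : ∀ t ≤ L, G.Adj v (f (i + t)) ↔ t = 0 ∨ t = L) :
    ∃ g : ZMod (L + 2) → V, IsHoleEmb G (L + 2) g := by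
  refine ⟨_, (hf.isCPath_arc i hLn).isHoleEmb_close (v := v) hL ?_ fun k => ?_⟩
  · rintro ⟨k, hk⟩
    exact hv ⟨_, hk⟩
  · rw [hvf k k.is_le, Fin.ext_iff, Fin.ext_iff, Fin.val_zero, Fin.val_last]

theorem ncard_nbrsOn_eq_card_filter [DecidableRel G.Adj] {n : ℕ} [NeZero n] {f : ZMod n → V}
    (hf : Function.Injective f) (u : V) (i : ZMod n) :
    (NbrsOn G f u).ncard = ((Finset.range n).filter fun t : ℕ => G.Adj u (f (i + t))).card := by
  have himage : NbrsOn G f u =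
      (fun t : ℕ => f (i + t)) '' ((Finset.range n).filter fun t : ℕ => G.Adj u (f (i + t))) := by
    ext w
    simp only [NbrsOn, Set.mem_ofPred_eq, Finset.coe_filter, Finset.mem_range, Set.mem_image]
    constructor
    · rintro ⟨⟨j, rfl⟩, hw⟩
      refine ⟨(j - i).val, ⟨ZMod.val_lt _, ?_⟩, ?_⟩ <;>
        rw [ZMod.natCast_zmod_val, add_sub_cancel]
      exact hw
    · rintro ⟨t, ⟨-, ht⟩, rfl⟩
      exact ⟨⟨_, rfl⟩, ht⟩
  rw [himage, Set.InjOn.ncard_image, Set.ncard_coe_finset]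
  intro s hs t ht hst
  simp only [Finset.coe_filter, Finset.mem_range, Set.mem_ofPred_eq] at hs ht
  exact (ZMod.natCast_inj_of_lt hs.1 ht.1).1 (add_left_cancel (hf hst))

end Holes

open Finset in
/-- Every even wheel contains an even hole. -/
theorem evenWheel_contains_even_hole {V : Type*} (G : SimpleGraph V) (n : ℕ)
    (f : ZMod n → V) (v : V) (hf : IsHoleEmb G n f) (hv : v ∉ Set.range f)
    (h3 : 3 ≤ (NbrsOn G f v).ncard) (heven : Even (NbrsOn G f v).ncard) :
    HasEvenHole G := by
  classical
  rcases Nat.even_or_odd n with hn | hn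
  · exact ⟨n, f, hf, hn⟩
  have : NeZero n := ⟨by have := hf.1; omega⟩
  obtain ⟨-, ⟨i, rfl⟩, hvi⟩ := Set.nonempty_of_ncard_ne_zero (s := NbrsOn G f v) (by omega)
  -- Neighbours of `v` as offsets from `f i` over a full turn: `0` and `n` both stand for `f i`,
  -- so the sectors of the wheel are exactly the gaps between consecutive elements of `T`.
  set T := (range (n + 1)).filter fun t : ℕ => G.Adj v (f (i + t)) with hT
  have hTn : ∀ t ∈ T, t ≤ n := fun t ht => Nat.lt_succ_iff.1 (mem_range.1 (mem_filter.1 ht).1)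
  have hmemT : ∀ t ≤ n, t ∈ T ↔ G.Adj v (f (i + t)) := fun t ht => by
    simp only [hT, mem_filter, mem_range]
    exact and_iff_right (by omega)
  have hcard : T.card = (NbrsOn G f v).ncard + 1 := by
    rw [hT, range_add_one, filter_insert, if_pos (by simpa using hvi),
      card_insert_of_notMem (by simp), ncard_nbrsOn_eq_card_filter hf.2.1 v i]
  obtain ⟨x, hx, y, hy, hxy, hxy_even, hgap⟩ :=
    exists_even_gap ((hmemT 0 n.zero_le).2 (by simpa using hvi))
      ((hmemT n le_rfl).2 (by simpa using hvi)) (fun c hc => ⟨c.zero_le, hTn c hc⟩)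
      (by obtain ⟨k, hk⟩ := hn; obtain ⟨l, hl⟩ := heven; omega)
  have hyn := hTn y hy
  have hbound := card_add_gap_le hTn hxy hyn hgap
  obtain ⟨g, hg⟩ := hf.exists_isHoleEmb_of_sector hv (i + x) (L := y - x)
    (by obtain ⟨k, hk⟩ := hxy_even; omega) (by omega) fun t ht => by
      rw [add_assoc, ← Nat.cast_add, ← hmemT _ (by omega)]
      refine ⟨fun h => by rcases hgap _ h with h | h <;> omega, ?_⟩
      rintro (rfl | rfl)
      · exact hx
      · rwa [Nat.add_sub_cancel' hxy.le]
  exact ⟨y - x + 2, g, hg, hxy_even.add even_two⟩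
end

section
/- Let G be a (square, prism, pyramid, theta, even wheel)-free graph, H a hole in G, and u a vertex not on H that is major with respect to H. Then u has at least five neighbors on H, or u has exactly three neighbors on H that are pairwise non-adjacent. -/
open SimpleGraph

variable {V : Type*}

/-! Two neighbours of `u` on the hole, which majority forces at distance at least 3 along it,
are the ends of a theta whose third path goes through `u`. Three neighbours two of which are
consecutive, say `f i`, `f (i + 1)` and `f j`, give a pyramid with apex `f j` and triangle
`u, f i, f (i + 1)`. Four neighbours form an even wheel.

After rotating the hole, positions on it are written as natural numbers `k ≤ n`, so that all
index bookkeeping becomes linear arithmetic. -/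

theorem ZMod.natCast_eq_natCast_iff_of_lt_two_mul {n a b : ℕ} (ha : a < 2 * n) (hb : b < 2 * n) :
    (a : ZMod n) = b ↔ a = b ∨ a + n = b ∨ b + n = a := by
  have hmod : ∀ x < 2 * n, x % n = if x < n then x else x - n := fun x hx => by
    split_ifs with h
    · exact Nat.mod_eq_of_lt h
    · rw [Nat.mod_eq_sub_mod (not_lt.mp h), Nat.mod_eq_of_lt (by omega)]
  rw [ZMod.natCast_eq_natCast_iff' a b n, hmod a ha, hmod b hb]
  split_ifs <;> omega

theorem ZMod.natCast_eq_neg_of_add_eq {n a k : ℕ} (h : a + k = n) : (a : ZMod n) = -k := by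
  rw [eq_neg_iff_add_eq_zero, ← Nat.cast_add, h, ZMod.natCast_self]

section

variable {G : SimpleGraph V} {n : ℕ} {f : ZMod n → V} {u : V}

theorem SimpleGraph.Adj.isCPath {x y : V} (h : G.Adj x y) : IsCPath G 1 ![x, y] := by
  refine ⟨fun a b hab => ?_, fun a b => ?_⟩ <;> fin_cases a <;> fin_cases b <;>
    simp_all [h.ne, h.ne', h.symm]

theorem isCPath_three {x y z : V} (hxy : G.Adj x y) (hyz : G.Adj y z) (hxz : ¬ G.Adj x z)
    (hxz' : x ≠ z) : IsCPath G 2 ![x, y, z] := by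
  have hzx : ¬ G.Adj z x := fun h => hxz h.symm
  refine ⟨fun a b hab => ?_, fun a b => ?_⟩ <;> fin_cases a <;> fin_cases b <;>
    simp_all [hxy.ne, hxy.ne', hyz.ne, hyz.ne', hxy.symm, hyz.symm, hxz'.symm]

theorem IsHoleEmb.neZero (hf : IsHoleEmb G n f) : NeZero n := ⟨by have := hf.1; omega⟩

theorem IsHoleEmb.apply_natCast_eq_iff (hf : IsHoleEmb G n f) {a b : ℕ} (ha : a ≤ n)
    (hb : b ≤ n) : f a = f b ↔ a = b ∨ a + n = b ∨ b + n = a := by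
  have := hf.1
  rw [hf.2.1.eq_iff, ZMod.natCast_eq_natCast_iff_of_lt_two_mul (by omega) (by omega)]

theorem IsHoleEmb.adj_natCast_iff (hf : IsHoleEmb G n f) {a b : ℕ} (ha : a ≤ n) (hb : b ≤ n) :
    G.Adj (f a) (f b) ↔ a + 1 = b ∨ b + 1 = a ∨ a + 1 = b + n ∨ b + 1 = a + n := by
  have := hf.1
  rw [hf.2.2, ← Nat.cast_succ, ← Nat.cast_succ,
    ZMod.natCast_eq_natCast_iff_of_lt_two_mul (by omega) (by omega),
    ZMod.natCast_eq_natCast_iff_of_lt_two_mul (by omega) (by omega)]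
  omega

theorem IsHoleEmb.isCPath_natCast (hf : IsHoleEmb G n f) {m : ℕ} (hm : m + 2 ≤ n) :
    IsCPath G m fun t => f (t.val : ZMod n) := by
  refine ⟨fun s t h => Fin.ext ?_, fun s t => ?_⟩
  · rw [hf.apply_natCast_eq_iff (by omega) (by omega)] at h
    omega
  · rw [hf.adj_natCast_iff (by omega) (by omega)]
    omega

theorem IsHoleEmb.isCPath_sub_natCast (hf : IsHoleEmb G n f) {m : ℕ} (hm : m + 2 ≤ n) :
    IsCPath G m fun t => f ((n - t.val : ℕ) : ZMod n) := by
  refine ⟨fun s t h => Fin.ext ?_, fun s t => ?_⟩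
  · rw [hf.apply_natCast_eq_iff (by omega) (by omega)] at h
    omega
  · rw [hf.adj_natCast_iff (by omega) (by omega)]
    omega

theorem IsHoleEmb.comp_add_left (hf : IsHoleEmb G n f) (i : ZMod n) :
    IsHoleEmb G n fun k => f (i + k) :=
  ⟨hf.1, hf.2.1.comp (add_right_injective i), fun a b => by
    simp only [hf.2.2, add_assoc, add_right_inj]⟩

theorem range_comp_add_left (f : ZMod n → V) (i : ZMod n) :
    Set.range (fun k => f (i + k)) = Set.range f :=
  (add_left_surjective i).range_comp f

theorem nbrsOn_comp_add_left (i : ZMod n) : NbrsOn G (fun k => f (i + k)) u = NbrsOn G f u := by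
  simp only [NbrsOn, range_comp_add_left]

theorem MajorWrt.comp_add_left (hu : MajorWrt G f u) (i : ZMod n) :
    MajorWrt G (fun k => f (i + k)) u := by
  refine ⟨range_comp_add_left f i ▸ hu.1, fun ⟨c, hc⟩ => hu.2 ⟨i + c, ?_⟩⟩
  rw [nbrsOn_comp_add_left] at hc
  simpa only [add_sub_assoc, add_assoc] using hc

theorem apply_mem_nbrsOn {k : ZMod n} : f k ∈ NbrsOn G f u ↔ G.Adj u (f k) :=
  ⟨And.right, fun h => ⟨⟨k, rfl⟩, h⟩⟩

-- In each excluded case all neighbours of `u` lie on three consecutive vertices of the hole.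
theorem MajorWrt.bounds_of_nbrsOn_eq_pair (hu : MajorWrt G f u) {l : ℕ} (hl : l < n)
    (hN : NbrsOn G f u = {f 0, f l}) : 3 ≤ l ∧ l + 3 ≤ n := by
  by_contra hlt
  obtain rfl | rfl | rfl | h | h : l = 0 ∨ l = 1 ∨ l = 2 ∨ l + 2 = n ∨ l + 1 = n := by omega
  · exact hu.2 ⟨0, by simp [hN]⟩
  · exact hu.2 ⟨0, by simp [hN]⟩
  · exact hu.2 ⟨1, by norm_num [hN, Set.insert_subset_iff]⟩
  · exact hu.2 ⟨-1, by norm_num [hN, ZMod.natCast_eq_neg_of_add_eq h, Set.insert_subset_iff]⟩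
  · exact hu.2 ⟨0, by simp [hN, ZMod.natCast_eq_neg_of_add_eq h, Set.insert_subset_iff]⟩

theorem MajorWrt.bounds_of_nbrsOn_eq_triple (hu : MajorWrt G f u) {m : ℕ} (hm : m < n)
    (hN : NbrsOn G f u = {f 0, f m, f (m + 1)}) : 2 ≤ m ∧ m + 3 ≤ n := by
  by_contra hlt
  obtain rfl | rfl | h | h : m = 0 ∨ m = 1 ∨ m + 2 = n ∨ m + 1 = n := by omega
  · exact hu.2 ⟨0, by simp [hN]⟩
  · exact hu.2 ⟨1, by norm_num [hN, Set.insert_subset_iff]⟩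
  · exact hu.2 ⟨-1, by norm_num [hN, ZMod.natCast_eq_neg_of_add_eq h, Set.insert_subset_iff]⟩
  · exact hu.2 ⟨0, by simp [hN, ZMod.natCast_eq_neg_of_add_eq h, Set.insert_subset_iff]⟩

theorem hasTheta_of_nbrsOn_eq_pair (hf : IsHoleEmb G n f) (hu : MajorWrt G f u) {l : ℕ}
    (hl : l < n) (hN : NbrsOn G f u = {f 0, f l}) : HasTheta G := by
  have hn := hf.1
  have hadj : ∀ k ≤ n, G.Adj u (f k) ↔ k = 0 ∨ k = l ∨ k = n := fun k hk => by
    rw [← apply_mem_nbrsOn, hN, Set.mem_insert_iff, Set.mem_singleton_iff, ← Nat.cast_zero,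
      hf.apply_natCast_eq_iff hk (Nat.zero_le n), hf.apply_natCast_eq_iff hk hl.le]
    omega
  have hbounds := hu.bounds_of_nbrsOn_eq_pair hl hN
  have hu0 : G.Adj u (f 0) := by simpa using (hadj 0 (Nat.zero_le n)).2 (Or.inl rfl)
  have h0l : ¬ G.Adj (f 0) (f l) := by
    rw [← Nat.cast_zero, hf.adj_natCast_iff (Nat.zero_le n) hl.le]
    omega
  have hne0l : f 0 ≠ f l := by
    rw [← Nat.cast_zero, Ne, hf.apply_natCast_eq_iff (Nat.zero_le n) hl.le]
    omega
  have hfu : ∀ k, f k ≠ u := fun k h => hu.1 ⟨k, h⟩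
  refine ⟨l, n - l, 2, fun t => f (t.val : ZMod n), fun t => f ((n - t.val : ℕ) : ZMod n),
    ![f 0, u, f l], by omega, by omega, le_rfl, hf.isCPath_natCast (by omega),
    hf.isCPath_sub_natCast (by omega), isCPath_three hu0.symm ((hadj l hl.le).2 (by omega)) h0l hne0l,
    by simp, by simp, ?_, by simp, by simpa using h0l, ?_, ?_, ?_⟩
  · simp only [Fin.val_last, Nat.sub_sub_self hl.le]
  · intro i j hi0 hil hj0 hjl
    simp only [Ne, Fin.ext_iff, Fin.val_zero, Fin.val_last] at hi0 hil hj0 hjl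
    dsimp only
    rw [Ne, hf.apply_natCast_eq_iff (by omega) (by omega), hf.adj_natCast_iff (by omega) (by omega)]
    omega
  · intro i j hi0 hil hj0 hjl
    simp only [Ne, Fin.ext_iff, Fin.val_zero, Fin.val_last] at hi0 hil
    fin_cases j <;> simp at hj0 hjl ⊢
    exact ⟨hfu _, fun h => by have := (hadj i (by omega)).1 h.symm; omega⟩
  · intro i j hi0 hil hj0 hjl
    simp only [Ne, Fin.ext_iff, Fin.val_zero, Fin.val_last] at hi0 hil
    fin_cases j <;> simp at hj0 hjl ⊢
    exact ⟨hfu _, fun h => by have := (hadj _ (by omega)).1 h.symm; omega⟩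

theorem hasPyramid_of_nbrsOn_eq_triple (hf : IsHoleEmb G n f) (hu : MajorWrt G f u) {m : ℕ}
    (hm : m < n) (hN : NbrsOn G f u = {f 0, f m, f (m + 1)}) : HasPyramid G := by
  have hn := hf.1
  have hadj : ∀ k ≤ n, G.Adj u (f k) ↔ k = 0 ∨ k = m ∨ k = m + 1 ∨ k = n := fun k hk => by
    rw [← apply_mem_nbrsOn, hN, Set.mem_insert_iff, Set.mem_insert_iff, Set.mem_singleton_iff,
      ← Nat.cast_zero, ← Nat.cast_succ, hf.apply_natCast_eq_iff hk (Nat.zero_le n),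
      hf.apply_natCast_eq_iff hk hm.le, hf.apply_natCast_eq_iff hk hm]
    omega
  have hbounds := hu.bounds_of_nbrsOn_eq_triple hm hN
  have hu0 : G.Adj u (f 0) := by simpa using (hadj 0 (Nat.zero_le n)).2 (Or.inl rfl)
  have hfu : ∀ k, f k ≠ u := fun k h => hu.1 ⟨k, h⟩
  refine ⟨1, m, n - 1 - m, ![f 0, u], fun t => f (t.val : ZMod n),
    fun t => f ((n - t.val : ℕ) : ZMod n), le_rfl, by omega, by omega,
    Or.inr (Or.inr ⟨by omega, by omega⟩), hu0.symm.isCPath, hf.isCPath_natCast (by omega),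
    hf.isCPath_sub_natCast (by omega), by simp, by simp, ?_, ?_, ?_, ?_, ?_, ?_⟩
  · refine Fin.forall_fin_two.2 ⟨fun j hj => ?_, fun j _ => (hfu _).symm⟩
    simp only [true_and, Fin.ext_iff, Fin.val_zero] at hj
    rw [Matrix.cons_val_zero, ← Nat.cast_zero, Ne,
      hf.apply_natCast_eq_iff (Nat.zero_le n) (by omega)]
    omega
  · refine Fin.forall_fin_two.2 ⟨fun j hj => ?_, fun j _ => (hfu _).symm⟩
    simp only [true_and, Fin.ext_iff, Fin.val_zero] at hj
    rw [Matrix.cons_val_zero, ← Nat.cast_zero, Ne,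
      hf.apply_natCast_eq_iff (Nat.zero_le n) (by omega)]
    omega
  · intro i j hij
    simp only [Fin.ext_iff, Fin.val_zero] at hij
    dsimp only
    rw [Ne, hf.apply_natCast_eq_iff (by omega) (by omega)]
    omega
  · refine Fin.forall_fin_two.2 ⟨fun j h => absurd rfl h, fun j _ hj => ?_⟩
    simp only [Ne, Fin.ext_iff, Fin.val_zero] at hj
    simp only [Matrix.cons_val_one, Matrix.cons_val_fin_one, Fin.ext_iff, Fin.val_last]
    rw [hadj _ (by omega)]
    omega
  · refine Fin.forall_fin_two.2 ⟨fun j h => absurd rfl h, fun j _ hj => ?_⟩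
    simp only [Ne, Fin.ext_iff, Fin.val_zero] at hj
    simp only [Matrix.cons_val_one, Matrix.cons_val_fin_one, Fin.ext_iff, Fin.val_last]
    rw [hadj _ (by omega)]
    omega
  · intro i j hi0 hj0
    simp only [Ne, Fin.ext_iff, Fin.val_zero, Fin.val_last] at hi0 hj0 ⊢
    rw [hf.adj_natCast_iff (by omega) (by omega)]
    omega

theorem ncard_nbrsOn_ne_two (hG : ¬ HasTheta G) (hf : IsHoleEmb G n f) (hu : MajorWrt G f u) :
    (NbrsOn G f u).ncard ≠ 2 := by
  have := hf.neZero
  intro h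
  obtain ⟨x, y, -, hxy⟩ := Set.ncard_eq_two.mp h
  obtain ⟨i, rfl⟩ := (hxy ▸ Set.mem_insert x {y} : x ∈ NbrsOn G f u).1
  obtain ⟨j, rfl⟩ := (hxy ▸ Set.mem_insert_of_mem _ rfl : y ∈ NbrsOn G f u).1
  refine hG (hasTheta_of_nbrsOn_eq_pair (hf.comp_add_left i) (hu.comp_add_left i)
    (ZMod.val_lt (j - i)) ?_)
  rw [nbrsOn_comp_add_left, hxy, add_zero, ZMod.natCast_zmod_val, add_sub_cancel]

theorem three_le_ncard_nbrsOn (hG : ¬ HasTheta G) (hf : IsHoleEmb G n f) (hu : MajorWrt G f u) :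
    3 ≤ (NbrsOn G f u).ncard := by
  have := hf.neZero
  have hfin : (NbrsOn G f u).Finite := (Set.finite_range f).subset fun _ hw => hw.1
  have h1 : 1 < (NbrsOn G f u).ncard := by
    have := hfin.to_subtype
    rw [Set.one_lt_ncard_iff_nontrivial, ← Set.not_subsingleton_iff]
    intro hs
    rcases hs.eq_empty_or_singleton with he | ⟨x, hx⟩
    · exact hu.2 ⟨0, he ▸ Set.empty_subset _⟩
    · obtain ⟨i, rfl⟩ := (hx ▸ Set.mem_singleton x : x ∈ NbrsOn G f u).1
      exact hu.2 ⟨i, by simp [hx]⟩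
  have h2 := ncard_nbrsOn_ne_two hG hf hu
  omega

theorem nbrsOn_pairwise_not_adj_of_ncard_eq_three (hG : ¬ HasPyramid G) (hf : IsHoleEmb G n f)
    (hu : MajorWrt G f u) (h3 : (NbrsOn G f u).ncard = 3) :
    ∀ w ∈ NbrsOn G f u, ∀ w' ∈ NbrsOn G f u, w ≠ w' → ¬ G.Adj w w' := by
  have := hf.neZero
  intro w hw w' hw' hne hadj
  obtain ⟨i, rfl⟩ := hw.1
  obtain ⟨i', rfl⟩ := hw'.1
  wlog hi : i' = i + 1 generalizing i i'
  · exact this i' hw' i hw hne.symm hadj.symm (((hf.2.2 i i').1 hadj).resolve_left hi)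
  subst hi
  obtain ⟨z, hz, hzi, hzi'⟩ : ∃ z ∈ NbrsOn G f u, z ≠ f i ∧ z ≠ f (i + 1) := by
    by_contra! hsub
    have := Set.ncard_le_ncard (s := NbrsOn G f u) (t := {f i, f (i + 1)}) fun z hz => by
      simp only [Set.mem_insert_iff, Set.mem_singleton_iff]; tauto
    rw [Set.ncard_pair hne] at this
    omega
  obtain ⟨j, rfl⟩ := hz.1
  have hN : {f j, f i, f (i + 1)} = NbrsOn G f u :=
    Set.eq_of_subset_of_ncard_le (by simp [Set.insert_subset_iff, hz, hw, hw'])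
      (by rw [h3, Set.ncard_eq_three.mpr ⟨_, _, _, hzi, hzi', hne, rfl⟩])
      (Set.finite_of_ncard_pos (by omega))
  refine hG (hasPyramid_of_nbrsOn_eq_triple (hf.comp_add_left j) (hu.comp_add_left j)
    (ZMod.val_lt (i - j)) ?_)
  rw [nbrsOn_comp_add_left, ← hN, add_zero, ZMod.natCast_zmod_val, ← add_assoc, add_sub_cancel]

end

/-- In a graph of class 𝒞, every major vertex w.r.t. a hole has at least five neighbors
on the hole, or exactly three pairwise non-adjacent neighbors on it. -/
theorem major_vertex_neighbors {V : Type*} (G : SimpleGraph V) (hG : ClassC G) (n : ℕ)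
    (f : ZMod n → V) (hf : IsHoleEmb G n f) (u : V) (hu : MajorWrt G f u) :
    5 ≤ (NbrsOn G f u).ncard ∨
      ((NbrsOn G f u).ncard = 3 ∧
        ∀ w ∈ NbrsOn G f u, ∀ w' ∈ NbrsOn G f u, w ≠ w' → ¬ G.Adj w w') := by
  obtain ⟨-, -, hpyramid, htheta, hwheel⟩ := hG
  have h3 := three_le_ncard_nbrsOn htheta hf hu
  have h4 : (NbrsOn G f u).ncard ≠ 4 := fun h4 =>
    hwheel ⟨n, f, u, hf, hu.1, by omega, by rw [h4]; decide⟩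
  obtain h5 | h3 : 5 ≤ (NbrsOn G f u).ncard ∨ (NbrsOn G f u).ncard = 3 := by omega
  · exact Or.inl h5
  · exact Or.inr ⟨h3, nbrsOn_pairwise_not_adj_of_ncard_eq_three hpyramid hf hu h3⟩
end

section
/- Let G be a (square, prism, pyramid, theta, even wheel)-free graph, H a hole in G, and u a vertex not on H that has a neighbor on H but is not major with respect to H. Then exactly one of the following holds: (i) u has a unique neighbor on H; (ii) u has exactly two neighbors on H and they are adjacent; (iii) u has exactly three neighbors on H and they induce a path of length 2. -/
open SimpleGraph

variable {V : Type*}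

/-! Since `u` is not major, its neighbours on the hole lie on a 3-vertex path
`f (i - 1), f i, f (i + 1)`, so there are at most three of them, and with three of them
they are the whole path. Two neighbours fail to be adjacent only if they are the two ends
`f (i - 1), f (i + 1)` of the path; then `u` misses `f i` and `u, f (i - 1), f i, f (i + 1)`
is a square. -/

theorem ZMod.natCast_ne_zero_of_pos_of_lt {n m : ℕ} (hm : 0 < m) (hmn : m < n) :
    (m : ZMod n) ≠ 0 := by
  rw [Ne, ZMod.natCast_eq_zero_iff]
  exact Nat.not_dvd_of_pos_of_lt hm hmn

theorem hasSquare_of_chordless_four_cycle {G : SimpleGraph V} {a b c d : V} (hab : G.Adj a b) (hbc : G.Adj b c)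
    (hcd : G.Adj c d) (hda : G.Adj d a) (hac : a ≠ c) (hbd : b ≠ d) (hnac : ¬ G.Adj a c)
    (hnbd : ¬ G.Adj b d) : HasSquare G := by
  have hZ4 : ∀ k : ZMod 4, k = 0 ∨ k = 1 ∨ k = 2 ∨ k = 3 := by decide
  refine ⟨![a, b, c, d], le_rfl, fun x y hxy => ?_, fun x y => ?_⟩ <;>
    rcases hZ4 x with rfl | rfl | rfl | rfl <;> rcases hZ4 y with rfl | rfl | rfl | rfl <;>
    simp_all +decide [G.adj_comm, hab.ne, hbc.ne, hcd.ne, hda.ne, hab.ne', hbc.ne', hcd.ne',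
      hda.ne', Ne.symm hac, Ne.symm hbd]

namespace IsHoleEmb

variable {G : SimpleGraph V} {n : ℕ} {f : ZMod n → V}

theorem adj_sub_one (hf : IsHoleEmb G n f) (i : ZMod n) : G.Adj (f (i - 1)) (f i) :=
  (hf.2.2 _ _).2 (Or.inl (sub_add_cancel i 1).symm)

theorem adj_add_one (hf : IsHoleEmb G n f) (i : ZMod n) : G.Adj (f i) (f (i + 1)) :=
  (hf.2.2 _ _).2 (Or.inl rfl)

theorem sub_one_ne_add_one (hf : IsHoleEmb G n f) (i : ZMod n) : f (i - 1) ≠ f (i + 1) := by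
  intro h
  have h2 : ((2 : ℕ) : ZMod n) = 0 := by push_cast; linear_combination -hf.2.1 h
  exact ZMod.natCast_ne_zero_of_pos_of_lt (by norm_num) (by linarith [hf.1]) h2

theorem not_adj_sub_one_add_one (hf : IsHoleEmb G n f) (i : ZMod n) :
    ¬ G.Adj (f (i - 1)) (f (i + 1)) := by
  rw [hf.2.2]
  rintro (h | h)
  · exact ZMod.natCast_ne_zero_of_pos_of_lt (m := 1) (by norm_num) (by linarith [hf.1])
      (by push_cast; linear_combination h)
  · exact ZMod.natCast_ne_zero_of_pos_of_lt (m := 3) (by norm_num) (by linarith [hf.1])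
      (by push_cast; linear_combination -h)

theorem adj_of_adj_sub_one_of_adj_add_one (hf : IsHoleEmb G n f) (hG : ¬ HasSquare G) {u : V}
    (hu : u ∉ Set.range f) {i : ZMod n} (h₁ : G.Adj u (f (i - 1))) (h₂ : G.Adj u (f (i + 1))) :
    G.Adj u (f i) := by
  by_contra h
  exact hG <| hasSquare_of_chordless_four_cycle (hf.adj_sub_one i) (hf.adj_add_one i) h₂.symm h₁
    (hf.sub_one_ne_add_one i) (fun h' => hu ⟨i, h'⟩) (hf.not_adj_sub_one_add_one i)
    (fun h' => h h'.symm)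

end IsHoleEmb

/-- In a graph of class 𝒞, a minor vertex w.r.t. a hole is pending, a cap, or a clone. -/
theorem minor_vertex_classification {V : Type*} (G : SimpleGraph V) (hG : ClassC G) (n : ℕ)
    (f : ZMod n → V) (hf : IsHoleEmb G n f) (u : V) (hu : u ∉ Set.range f)
    (hne : (NbrsOn G f u).Nonempty) (hnm : ¬ MajorWrt G f u) :
    (NbrsOn G f u).ncard = 1 ∨
    ((NbrsOn G f u).ncard = 2 ∧
      ∀ w ∈ NbrsOn G f u, ∀ w' ∈ NbrsOn G f u, w ≠ w' → G.Adj w w') ∨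
    ((NbrsOn G f u).ncard = 3 ∧
      ∃ i : ZMod n, NbrsOn G f u = {f (i - 1), f i, f (i + 1)}) := by
  obtain ⟨i, hsub⟩ : ∃ i : ZMod n, NbrsOn G f u ⊆ {f (i - 1), f i, f (i + 1)} :=
    not_not.mp fun h => hnm ⟨hu, h⟩
  have hfin : ({f (i - 1), f i, f (i + 1)} : Set V).Finite := Set.toFinite _
  have hcard : ({f (i - 1), f i, f (i + 1)} : Set V).ncard = 3 := Set.ncard_eq_three.mpr
    ⟨_, _, _, (hf.adj_sub_one i).ne, hf.sub_one_ne_add_one i, (hf.adj_add_one i).ne, rfl⟩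
  have hle := hcard ▸ Set.ncard_le_ncard hsub hfin
  have hpos := (Set.ncard_pos (hfin.subset hsub)).mpr hne
  obtain h | h | h : (NbrsOn G f u).ncard = 1 ∨ (NbrsOn G f u).ncard = 2 ∨
      (NbrsOn G f u).ncard = 3 := by omega
  · exact Or.inl h
  · refine Or.inr (Or.inl ⟨h, fun w hw w' hw' hww' => ?_⟩)
    have hends : ¬ (G.Adj u (f (i - 1)) ∧ G.Adj u (f (i + 1))) := by
      rintro ⟨h₁, h₂⟩
      have hall : {f (i - 1), f i, f (i + 1)} ⊆ NbrsOn G f u := by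
        rintro _ (rfl | rfl | rfl)
        exacts [⟨⟨_, rfl⟩, h₁⟩, ⟨⟨_, rfl⟩, hf.adj_of_adj_sub_one_of_adj_add_one hG.1 hu h₁ h₂⟩,
          ⟨⟨_, rfl⟩, h₂⟩]
      have := Set.ncard_le_ncard hall (hfin.subset hsub)
      omega
    rcases hsub hw with rfl | rfl | rfl <;> rcases hsub hw' with rfl | rfl | rfl <;>
      first
      | exact absurd rfl hww'
      | exact hf.adj_sub_one i
      | exact (hf.adj_sub_one i).symm
      | exact hf.adj_add_one i
      | exact (hf.adj_add_one i).symm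
      | exact (hends ⟨hw.2, hw'.2⟩).elim
      | exact (hends ⟨hw'.2, hw.2⟩).elim
  · exact Or.inr (Or.inr ⟨h, i, Set.eq_of_subset_of_ncard_le hsub (by omega) hfin⟩)
end

section
/- Let G be a (square, prism, pyramid, theta, even wheel)-free graph and H a hole of G. If u and v are vertices not on H, each of which is major with respect to H or a clone of some vertex of H with respect to H, and u and v are nested with respect to H, then u and v are non-adjacent. -/
open SimpleGraph

variable {V : Type*}

/-!
Both `u` and `v` have two non-adjacent neighbours on the hole `H`. A vertex with two non-adjacent
neighbours on a hole sees an odd number `≥ 3` of its vertices: exactly two would give a theta,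
an even number an even wheel. Now let `a`, `b` be the extreme neighbours of `u` on its side of
`H`. The path of `H` from `b` to `a` through the other side, closed up by `u`, is a hole `H'`
containing all neighbours of `v` on `H`. If `u` and `v` were adjacent, `v` would see an even
number `≥ 4` of vertices of `H'`, an even wheel.
-/

namespace ZMod

theorem natCast_inj_of_lt_s9 {n p q : ℕ} (hp : p < n) (hq : q < n) :
    (p : ZMod n) = q ↔ p = q := by
  refine ⟨fun h => ?_, congrArg _⟩
  simpa only [val_cast_of_lt hp, val_cast_of_lt hq] using congrArg val h

theorem natCast_ne_zero_of_lt {n m : ℕ} (h0 : 0 < m) (hm : m < n) : (m : ZMod n) ≠ 0 := by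
  rw [← Nat.cast_zero, Ne, natCast_inj_of_lt_s9 hm (by omega)]
  omega

theorem add_natCast_val_sub {n : ℕ} [NeZero n] (i x : ZMod n) :
    i + ((x - i).val : ZMod n) = x := by
  rw [natCast_zmod_val, add_sub_cancel]

theorem eq_add_one_iff_val_s9 {n : ℕ} [NeZero n] (x y : ZMod n) :
    y = x + 1 ↔ y.val = (x.val + 1) % n := by
  rw [← (val_injective n).eq_iff, val_add, val_one_eq_one_mod, Nat.add_mod_mod]

end ZMod

theorem eq_or_val_sub_le_of_mem_arc {n : ℕ} [NeZero n] {i j x : ZMod n} (hij : i ≠ j)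
    (hx : x ∈ arc j i) : x = i ∨ (j - i).val ≤ (x - i).val := by
  have hji : j - i ≠ 0 := sub_ne_zero.2 hij.symm
  have hle : (x - j).val + (j - i).val ≤ n := by
    have h : (x - j).val ≤ (i - j).val := hx
    rw [← neg_sub j i] at h
    rw [ZMod.neg_val, if_neg hji] at h
    have := (j - i).val_lt
    omega
  have hsum : (x - i).val = ((x - j).val + (j - i).val) % n := by
    rw [← ZMod.val_add, sub_add_sub_cancel]
  rcases hle.lt_or_eq with hlt | heq
  · rw [hsum, Nat.mod_eq_of_lt hlt]
    omega
  · rw [heq, Nat.mod_self, ZMod.val_eq_zero, sub_eq_zero] at hsum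
    exact .inl hsum

def cycleOfPath {k : ℕ} (P : Fin (k + 1) → V) (u : V) : ZMod (k + 2) → V :=
  fun x => if h : x.val < k + 1 then P ⟨x.val, h⟩ else u

section cycleOfPath

variable {k : ℕ} {P : Fin (k + 1) → V} {u : V} {x : ZMod (k + 2)}

theorem cycleOfPath_of_lt (h : x.val < k + 1) : cycleOfPath P u x = P ⟨x.val, h⟩ := dif_pos h

theorem cycleOfPath_of_eq (h : x.val = k + 1) : cycleOfPath P u x = u := dif_neg (by omega)

theorem range_cycleOfPath : Set.range (cycleOfPath P u) = insert u (Set.range P) := by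
  ext w
  simp only [Set.mem_range, Set.mem_insert_iff]
  constructor
  · rintro ⟨x, rfl⟩
    rcases (show x.val < k + 1 ∨ x.val = k + 1 by have := x.val_lt; omega) with hx | hx
    · exact .inr ⟨_, (cycleOfPath_of_lt hx).symm⟩
    · exact .inl (cycleOfPath_of_eq hx)
  · rintro (rfl | ⟨s, rfl⟩)
    · exact ⟨(k + 1 : ℕ), cycleOfPath_of_eq (ZMod.val_cast_of_lt (by omega))⟩
    · have hs : ((s.val : ℕ) : ZMod (k + 2)).val = s.val := ZMod.val_cast_of_lt (by omega)
      refine ⟨(s.val : ℕ), ?_⟩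
      rw [cycleOfPath_of_lt (by rw [hs]; exact s.isLt)]
      exact congrArg P (Fin.ext hs)

end cycleOfPath

theorem isCPath_triple {G : SimpleGraph V} {x v y : V} (hxy : x ≠ y) (hxv : G.Adj x v)
    (hvy : G.Adj v y) (hnadj : ¬ G.Adj x y) : IsCPath G 2 ![x, v, y] := by
  have hvx := (G.ne_of_adj hxv).symm
  have hvy' := G.ne_of_adj hvy
  refine ⟨fun s t hst => ?_, fun s t => ?_⟩
  · fin_cases s <;> fin_cases t <;> simp_all [eq_comm]
  · fin_cases s <;> fin_cases t <;> simp [hxv, hvy, hxv.symm, hvy.symm, hnadj, G.adj_comm y]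

namespace IsCPath

variable {G : SimpleGraph V} {k : ℕ} {P : Fin (k + 1) → V}

theorem comp_rev (hP : IsCPath G k P) : IsCPath G k (P ∘ Fin.rev) := by
  refine ⟨hP.1.comp Fin.rev_injective, fun s t => ?_⟩
  simp only [Function.comp_apply, hP.2, Fin.val_rev]
  omega

theorem two_le_of_nonadj (hP : IsCPath G k P) {x y : V} (hx : x ∈ Set.range P)
    (hy : y ∈ Set.range P) (hxy : x ≠ y) (hnadj : ¬ G.Adj x y) : 2 ≤ k := by
  obtain ⟨s, rfl⟩ := hx
  obtain ⟨t, rfl⟩ := hy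
  have hst : s.val ≠ t.val := fun h => hxy (congrArg P (Fin.ext h))
  rw [hP.2] at hnadj
  omega

theorem isHoleEmb_cycleOfPath (hP : IsCPath G k P) (hk : 2 ≤ k) {u : V}
    (hu : u ∉ Set.range P) (hadj : ∀ s, G.Adj u (P s) ↔ s = 0 ∨ s = Fin.last k) :
    IsHoleEmb G (k + 2) (cycleOfPath P u) := by
  have hsucc : ∀ x y : ZMod (k + 2),
      y = x + 1 ↔ y.val = if x.val = k + 1 then 0 else x.val + 1 := by
    intro x y
    rw [ZMod.eq_add_one_iff_val_s9]
    have := x.val_lt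
    split_ifs with h
    · rw [h, Nat.mod_self]
    · rw [Nat.mod_eq_of_lt (by omega)]
  have hcases : ∀ x : ZMod (k + 2), x.val < k + 1 ∨ x.val = k + 1 := fun x => by
    have := x.val_lt
    omega
  refine ⟨by omega, fun x y hxy => ZMod.val_injective _ ?_, fun x y => ?_⟩
  · rcases hcases x with hx | hx <;> rcases hcases y with hy | hy
    · rw [cycleOfPath_of_lt hx, cycleOfPath_of_lt hy] at hxy
      exact Fin.mk.inj_iff.1 (hP.1 hxy)
    · rw [cycleOfPath_of_lt hx, cycleOfPath_of_eq hy] at hxy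
      exact (hu ⟨_, hxy⟩).elim
    · rw [cycleOfPath_of_eq hx, cycleOfPath_of_lt hy] at hxy
      exact (hu ⟨_, hxy.symm⟩).elim
    · omega
  · rw [hsucc, hsucc]
    rcases hcases x with hx | hx <;> rcases hcases y with hy | hy
    · rw [cycleOfPath_of_lt hx, cycleOfPath_of_lt hy, hP.2]
      dsimp only
      split_ifs <;> omega
    · rw [cycleOfPath_of_lt hx, cycleOfPath_of_eq hy, G.adj_comm, hadj, Fin.ext_iff, Fin.ext_iff]
      simp only [Fin.val_zero, Fin.val_last]
      split_ifs <;> omega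
    · rw [cycleOfPath_of_eq hx, cycleOfPath_of_lt hy, hadj, Fin.ext_iff, Fin.ext_iff]
      simp only [Fin.val_zero, Fin.val_last]
      split_ifs <;> omega
    · rw [cycleOfPath_of_eq hx, cycleOfPath_of_eq hy, if_pos hx, if_pos hy]
      simp only [G.irrefl, false_iff]
      omega

end IsCPath

theorem nbrsOn_eq_insert_of_range_eq {G : SimpleGraph V} {m n : ℕ} {f : ZMod n → V}
    {g : ZMod m → V} {u v : V} {S : Set V} (hg : Set.range g = insert u S)
    (hS : S ⊆ Set.range f) (hN : NbrsOn G f v ⊆ S) (hvu : G.Adj v u) :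
    NbrsOn G g v = insert u (NbrsOn G f v) := by
  ext w
  simp only [NbrsOn, hg, Set.mem_insert_iff]
  constructor
  · rintro ⟨rfl | hw, hvw⟩
    · exact .inl rfl
    · exact .inr ⟨hS hw, hvw⟩
  · rintro (rfl | hw)
    · exact ⟨.inl rfl, hvu⟩
    · exact ⟨.inr (hN hw), hw.2⟩

namespace IsHoleEmb

variable {G : SimpleGraph V} {n : ℕ} {f : ZMod n → V}

theorem neZero_s9 (hf : IsHoleEmb G n f) : NeZero n := ⟨by have := hf.1; omega⟩

theorem finite_nbrsOn (hf : IsHoleEmb G n f) (v : V) : (NbrsOn G f v).Finite :=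
  have := hf.neZero_s9
  (Set.finite_range f).subset fun _ hw => hw.1

theorem add_natCast_inj (hf : IsHoleEmb G n f) (a : ZMod n) {p q : ℕ} (hp : p < n) (hq : q < n) :
    f (a + p) = f (a + q) ↔ p = q := by
  rw [hf.2.1.eq_iff, add_right_inj, ZMod.natCast_inj_of_lt_s9 hp hq]

theorem adj_add_natCast_iff (hf : IsHoleEmb G n f) (a : ZMod n) {p q : ℕ} (hp : p < n)
    (hq : q < n) : G.Adj (f (a + p)) (f (a + q)) ↔
      q = p + 1 ∨ p = q + 1 ∨ (p = n - 1 ∧ q = 0) ∨ (q = n - 1 ∧ p = 0) := by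
  have := hf.neZero_s9
  have hsucc : ∀ {p q : ℕ}, p < n → q < n →
      (a + q = a + p + 1 ↔ q = p + 1 ∨ (p = n - 1 ∧ q = 0)) := by
    intro p q hp hq
    rw [add_assoc, add_right_inj, ZMod.eq_add_one_iff_val_s9, ZMod.val_cast_of_lt hp,
      ZMod.val_cast_of_lt hq]
    rcases (show p + 1 ≤ n by omega).lt_or_eq with h | h
    · rw [Nat.mod_eq_of_lt h]
      omega
    · rw [h, Nat.mod_self]
      omega
  rw [hf.2.2, hsucc hp hq, hsucc hq hp]
  omega

theorem isCPath_add (hf : IsHoleEmb G n f) (a : ZMod n) {k : ℕ} (hk : k + 2 ≤ n) :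
    IsCPath G k fun s : Fin (k + 1) => f (a + s.val) := by
  refine ⟨fun s t h => Fin.ext ((hf.add_natCast_inj a (by omega) (by omega)).1 h),
    fun s t => ?_⟩
  rw [hf.adj_add_natCast_iff a (by omega) (by omega)]
  omega

theorem exists_nonadj_nbrs (hf : IsHoleEmb G n f) {u : V}
    (hu : MajorWrt G f u ∨ ∃ c, CloneWrt G f u c) :
    ∃ p q, G.Adj u (f p) ∧ G.Adj u (f q) ∧ p ≠ q ∧ ¬ G.Adj (f p) (f q) := by
  have hn := hf.1
  rcases hu with ⟨-, hmaj⟩ | ⟨c, -, hc⟩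
  · by_contra! h
    obtain ⟨_, ⟨p, rfl⟩, hp⟩ : (NbrsOn G f u).Nonempty := by
      rw [Set.nonempty_iff_ne_empty]
      rintro he
      exact hmaj ⟨0, he ▸ Set.empty_subset _⟩
    refine hmaj ⟨p, ?_⟩
    rintro _ ⟨⟨q, rfl⟩, hq⟩
    by_cases hpq : p = q
    · simp [hpq]
    · rcases (hf.2.2 p q).1 (h p q hp hq hpq) with rfl | rfl <;> simp
  · have hmem : ∀ w ∈ ({f (c - 1), f c, f (c + 1)} : Set V), G.Adj u w :=
      fun w hw => (hc ▸ hw).2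
    refine ⟨c - 1, c + 1, hmem _ (by simp), hmem _ (by simp), fun h => ?_, fun h => ?_⟩
    · exact ZMod.natCast_ne_zero_of_lt (n := n) (m := 2) two_pos (by omega)
        (by push_cast; linear_combination -h)
    · rcases (hf.2.2 _ _).1 h with h | h
      · exact ZMod.natCast_ne_zero_of_lt (n := n) (m := 1) one_pos (by omega)
          (by push_cast; linear_combination h)
      · exact ZMod.natCast_ne_zero_of_lt (n := n) (m := 3) (by norm_num) (by omega)
          (by push_cast; linear_combination -h)

theorem hasTheta_of_adj_add_natCast_iff (hf : IsHoleEmb G n f) {v : V}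
    (hv : v ∉ Set.range f) (p : ZMod n) {e : ℕ} (he : 2 ≤ e) (hen : e + 2 ≤ n)
    (hvadj : ∀ s < n, G.Adj v (f (p + s)) ↔ s = 0 ∨ s = e) : HasTheta G := by
  have hv_ne : ∀ x, v ≠ f x := fun x h => hv ⟨x, h.symm⟩
  have hoff : ∀ t : ℕ, p + e + (t : ZMod n) = p + ((e + t : ℕ) : ZMod n) := by
    intro t
    push_cast
    ring
  have interior : ∀ {m : ℕ} {y : Fin (m + 1)}, y ≠ 0 → y ≠ Fin.last m →
      0 < y.val ∧ y.val < m :=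
    fun h0 hl => ⟨Fin.pos_of_ne_zero h0, Fin.val_lt_last hl⟩
  let F₁ : Fin 3 → V := ![f p, v, f (p + e)]
  let F₂ : Fin (e + 1) → V := fun s => f (p + s.val)
  let F₃ : Fin (n - e + 1) → V := (fun s => f (p + e + s.val)) ∘ Fin.rev
  have hF₁ : IsCPath G 2 F₁ := by
    have hne := hf.add_natCast_inj p (p := 0) (q := e) (by omega) (by omega)
    have hnadj := hf.adj_add_natCast_iff p (p := 0) (q := e) (by omega) (by omega)
    have hvp := (hvadj 0 (by omega)).2 (.inl rfl)
    simp only [Nat.cast_zero, add_zero] at hne hnadj hvp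
    exact isCPath_triple (by rw [Ne, hne]; omega) hvp.symm ((hvadj e (by omega)).2 (.inr rfl))
      (by rw [hnadj]; omega)
  refine ⟨2, e, n - e, F₁, F₂, F₃, le_rfl, he, by omega, hF₁, hf.isCPath_add p (by omega),
    (hf.isCPath_add _ (by omega)).comp_rev, by simp [F₁, F₂], ?_, rfl, by simp [F₁, F₃],
    hF₁.2 0 2 |>.not.2 (by simp), ?_, ?_, ?_⟩
  · simp only [F₁, F₃, Function.comp_apply, Fin.val_rev, Fin.val_zero, hoff]
    rw [show e + (n - e + 1 - (0 + 1)) = n by omega]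
    simp
  · intro x y hx0 hx2 hy0 hye
    have hy := interior hy0 hye
    fin_cases x <;> simp at hx0 hx2
    refine ⟨hv_ne _, ?_⟩
    show ¬ G.Adj v _
    rw [hvadj _ (by omega)]
    omega
  · intro x y hx0 hx2 hy0 hye
    have hy := interior hy0 hye
    fin_cases x <;> simp at hx0 hx2
    simp only [F₃, Function.comp_apply, Fin.val_rev, hoff]
    refine ⟨hv_ne _, ?_⟩
    show ¬ G.Adj v _
    rw [hvadj _ (by omega)]
    omega
  · intro x y hx0 hxe hy0 hye
    have hx := interior hx0 hxe
    have hy := interior hy0 hye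
    simp only [F₂, F₃, Function.comp_apply, Fin.val_rev, hoff]
    rw [Ne, hf.add_natCast_inj p (by omega) (by omega),
      hf.adj_add_natCast_iff p (by omega) (by omega)]
    omega

theorem hasTheta_of_nbrsOn_eq_pair (hf : IsHoleEmb G n f) {v : V} (hv : v ∉ Set.range f)
    {p q : ZMod n} (hpq : p ≠ q) (hnadj : ¬ G.Adj (f p) (f q))
    (hN : NbrsOn G f v = {f p, f q}) : HasTheta G := by
  have := hf.neZero_s9
  set e := (q - p).val
  have hen : e < n := ZMod.val_lt _
  have hq : q = p + e := (ZMod.add_natCast_val_sub p q).symm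
  have hp : f p = f (p + ((0 : ℕ) : ZMod n)) := by simp
  have he0 : e ≠ 0 := fun h => hpq (by rw [hq, h, Nat.cast_zero, add_zero])
  rw [hp, hq, hf.adj_add_natCast_iff p (by omega) hen] at hnadj
  refine hf.hasTheta_of_adj_add_natCast_iff hv p (e := e) (by omega) (by omega) fun s hs => ?_
  have h : G.Adj v (f (p + s)) ↔ f (p + s) ∈ NbrsOn G f v :=
    ⟨fun h => ⟨⟨_, rfl⟩, h⟩, (·.2)⟩
  rw [h, hN, Set.mem_insert_iff, Set.mem_singleton_iff, hq, hp,
    hf.add_natCast_inj p hs (by omega), hf.add_natCast_inj p hs hen]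

theorem three_le_ncard_nbrsOn_and_odd (hθ : ¬ HasTheta G) (hW : ¬ HasEvenWheel G)
    (hf : IsHoleEmb G n f) {v : V} (hv : MajorWrt G f v ∨ ∃ c, CloneWrt G f v c) :
    3 ≤ (NbrsOn G f v).ncard ∧ Odd (NbrsOn G f v).ncard := by
  have hn := hf.1
  rcases hv with hmaj | ⟨c, -, hc⟩
  · obtain ⟨p, q, hp, hq, hpq, hnadj⟩ := hf.exists_nonadj_nbrs (.inl hmaj)
    have hpair : {f p, f q} ⊆ NbrsOn G f v :=
      Set.insert_subset ⟨⟨p, rfl⟩, hp⟩ (Set.singleton_subset_iff.2 ⟨⟨q, rfl⟩, hq⟩)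
    have h2 := Set.ncard_pair (hf.2.1.ne hpq)
    by_cases h3 : 3 ≤ (NbrsOn G f v).ncard
    · exact ⟨h3, Nat.not_even_iff_odd.1 fun he => hW ⟨n, f, v, hf, hmaj.1, h3, he⟩⟩
    · have hN := (Set.eq_of_subset_of_ncard_le hpair (by omega) (hf.finite_nbrsOn v)).symm
      exact (hθ (hf.hasTheta_of_nbrsOn_eq_pair hmaj.1 hpq hnadj hN)).elim
  · have hne : ∀ {m : ℕ} {x y : ZMod n}, 0 < m → m < n → y = x + m → f x ≠ f y :=
      fun h0 hm hxy h => ZMod.natCast_ne_zero_of_lt h0 hm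
        (by linear_combination -hxy - hf.2.1 h)
    rw [hc, Set.ncard_insert_of_notMem, Set.ncard_pair]
    · exact ⟨le_rfl, by decide⟩
    · exact hne (m := 1) one_pos (by omega) (by simp)
    · rw [Set.mem_insert_iff, Set.mem_singleton_iff, not_or]
      exact ⟨hne (m := 1) one_pos (by omega) (by simp),
        hne (m := 2) two_pos (by omega) (by push_cast; ring)⟩

theorem exists_extreme_nbr_offsets (hf : IsHoleEmb G n f) {u : V} {i j p q : ZMod n}
    (hsub : NbrsOn G f u ⊆ f '' arc i j) (hp : G.Adj u (f p)) (hq : G.Adj u (f q))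
    (hpq : p ≠ q) (hnadj : ¬ G.Adj (f p) (f q)) :
    ∃ t₁ t₂ : ℕ, t₁ + 2 ≤ t₂ ∧ t₂ ≤ (j - i).val ∧ G.Adj u (f (i + t₁)) ∧
      G.Adj u (f (i + t₂)) ∧ ∀ t < n, G.Adj u (f (i + t)) → t₁ ≤ t ∧ t ≤ t₂ := by
  classical
  have := hf.neZero_s9
  let T := (Finset.range n).filter fun t : ℕ => G.Adj u (f (i + t))
  have mem_T : ∀ {t}, t ∈ T ↔ t < n ∧ G.Adj u (f (i + t)) := by simp [T]
  have offset_mem : ∀ {x}, G.Adj u (f x) → (x - i).val ∈ T := fun hx =>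
    mem_T.2 ⟨ZMod.val_lt _, by rwa [ZMod.add_natCast_val_sub]⟩
  have le_D : ∀ t ∈ T, t ≤ (j - i).val := by
    intro t ht
    obtain ⟨htn, hadj⟩ := mem_T.1 ht
    obtain ⟨y, hy, hfy⟩ := hsub ⟨⟨_, rfl⟩, hadj⟩
    have hy' : (i + t - i).val ≤ (j - i).val := hf.2.1 hfy ▸ hy
    rwa [add_sub_cancel_left, ZMod.val_cast_of_lt htn] at hy'
  have hne : T.Nonempty := ⟨_, offset_mem hp⟩
  have hspread : T.min' hne + 2 ≤ T.max' hne := by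
    have hp' := offset_mem hp
    have hq' := offset_mem hq
    have h1 := T.min'_le _ hp'
    have h2 := T.min'_le _ hq'
    have h3 := T.le_max' _ hp'
    have h4 := T.le_max' _ hq'
    have hpq' : (p - i).val ≠ (q - i).val := fun h =>
      hpq (by rw [← ZMod.add_natCast_val_sub i p, h, ZMod.add_natCast_val_sub])
    rw [← ZMod.add_natCast_val_sub i p, ← ZMod.add_natCast_val_sub i q,
      hf.adj_add_natCast_iff i (ZMod.val_lt _) (ZMod.val_lt _)] at hnadj
    omega
  exact ⟨T.min' hne, T.max' hne, hspread, le_D _ (T.max'_mem hne),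
    (mem_T.1 (T.min'_mem hne)).2, (mem_T.1 (T.max'_mem hne)).2,
    fun t ht hadj => have ht' := mem_T.2 ⟨ht, hadj⟩; ⟨T.min'_le _ ht', T.le_max' _ ht'⟩⟩

theorem exists_outer_arc (hf : IsHoleEmb G n f) {u : V} {i j p q : ZMod n} (hij : i ≠ j)
    (hsub : NbrsOn G f u ⊆ f '' arc i j) (hp : G.Adj u (f p)) (hq : G.Adj u (f q))
    (hpq : p ≠ q) (hnadj : ¬ G.Adj (f p) (f q)) :
    ∃ (b : ZMod n) (k : ℕ), k + 2 ≤ n ∧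
      (∀ s : Fin (k + 1), G.Adj u (f (b + s.val)) ↔ s = 0 ∨ s = Fin.last k) ∧
      f '' arc j i ⊆ Set.range fun s : Fin (k + 1) => f (b + s.val) := by
  have := hf.neZero_s9
  obtain ⟨t₁, t₂, h12, h2D, ht₁, ht₂, hbetween⟩ :=
    hf.exists_extreme_nbr_offsets hsub hp hq hpq hnadj
  have hD := (j - i).val_lt
  refine ⟨i + t₂, n - (t₂ - t₁), by omega, fun s => ?_, ?_⟩
  · rw [Fin.ext_iff, Fin.ext_iff, Fin.val_zero, Fin.val_last, add_assoc, ← Nat.cast_add]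
    have hs := s.isLt
    rcases lt_or_ge (t₂ + s.val) n with h | h
    · constructor
      · intro hadj
        have := hbetween _ h hadj
        omega
      · rintro (h0 | hk)
        · rwa [h0, add_zero]
        · omega
    · rw [← Nat.sub_add_cancel h, Nat.cast_add, ZMod.natCast_self, add_zero]
      constructor
      · intro hadj
        have := hbetween _ (by omega) hadj
        omega
      · rintro (h0 | hk)
        · omega
        · rwa [show t₂ + s.val - n = t₁ by omega]
  · rintro _ ⟨x, hx, rfl⟩
    rcases eq_or_val_sub_le_of_mem_arc hij hx with rfl | hle
    · refine ⟨⟨n - t₂, by omega⟩, ?_⟩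
      dsimp only
      rw [add_assoc, ← Nat.cast_add, Nat.add_sub_cancel' (by omega), ZMod.natCast_self, add_zero]
    · have := (x - i).val_lt
      refine ⟨⟨(x - i).val - t₂, by omega⟩, ?_⟩
      dsimp only
      rw [add_assoc, ← Nat.cast_add, Nat.add_sub_cancel' (by omega), ZMod.add_natCast_val_sub]

end IsHoleEmb

/-- In a graph of class 𝒞, two nested vertices which are each major or a clone
w.r.t. a hole are non-adjacent. -/
theorem nested_nonadjacent {V : Type*} (G : SimpleGraph V) (hG : ClassC G) (n : ℕ)
    (f : ZMod n → V) (hf : IsHoleEmb G n f) (u v : V)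
    (hum : MajorWrt G f u ∨ ∃ i : ZMod n, CloneWrt G f u i)
    (hvm : MajorWrt G f v ∨ ∃ i : ZMod n, CloneWrt G f v i)
    (hnest : NestedWrt G f u v) :
    ¬ G.Adj u v := by
  intro huv
  have hu_out : u ∉ Set.range f := by rcases hum with h | ⟨_, h⟩ <;> exact h.1
  have hv_out : v ∉ Set.range f := by rcases hvm with h | ⟨_, h⟩ <;> exact h.1
  obtain ⟨i, j, hij, hu_arc, hv_arc⟩ := hnest
  obtain ⟨p, q, hup, huq, hpq, hpq_nadj⟩ := hf.exists_nonadj_nbrs hum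
  obtain ⟨b, k, hkn, hu_ends, hcover⟩ := hf.exists_outer_arc hij hu_arc hup huq hpq hpq_nadj
  set P : Fin (k + 1) → V := fun s => f (b + s.val)
  have hP : IsCPath G k P := hf.isCPath_add b hkn
  have hPf : Set.range P ⊆ Set.range f := Set.range_subset_iff.2 fun s => ⟨_, rfl⟩
  have hvP : NbrsOn G f v ⊆ Set.range P := hv_arc.trans hcover
  obtain ⟨x, y, hvx, hvy, hxy, hxy_nadj⟩ := hf.exists_nonadj_nbrs hvm
  have hk : 2 ≤ k :=
    hP.two_le_of_nonadj (hvP ⟨⟨x, rfl⟩, hvx⟩) (hvP ⟨⟨y, rfl⟩, hvy⟩) (hf.2.1.ne hxy) hxy_nadj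
  have hg := hP.isHoleEmb_cycleOfPath hk (fun h => hu_out (hPf h)) hu_ends
  have hv_g : v ∉ Set.range (cycleOfPath P u) := by
    rw [range_cycleOfPath]
    rintro (h | h)
    exacts [G.ne_of_adj huv h.symm, hv_out (hPf h)]
  have hcard : (NbrsOn G (cycleOfPath P u) v).ncard = (NbrsOn G f v).ncard + 1 := by
    rw [nbrsOn_eq_insert_of_range_eq range_cycleOfPath hPf hvP huv.symm,
      Set.ncard_insert_of_notMem (fun h => hu_out h.1) (hf.finite_nbrsOn v)]
  obtain ⟨h3, hodd⟩ := hf.three_le_ncard_nbrsOn_and_odd hG.2.2.2.1 hG.2.2.2.2 hvm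
  exact hG.2.2.2.2 ⟨k + 2, _, v, hg, hv_g, by omega, hcard ▸ hodd.add_one⟩
end
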